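/- arXiv:1212.3750 — 8 statements merged into one kernel-verified Lean document; each statement's English description precedes it below -/
import Mathlib

section
/- Let m_1, ..., m_s be positive integers that are pairwise coprime and such that each m_i divides m_1 + m_2 + ... + m_s. Then the multinomial sequence a_n = ((m_1+...+m_s)n)! / ((m_1 n)! · ... · (m_s n)!) is mean divisible: for all positive integers k and t, the product ∏_{n=1}^t a_n divides ∏_{n=1}^t a_{kn}. -/
open Finset

namespace AkiyamaAux

variable {s : ℕ}

/-- The integer-valued carry function `D q x = ⌊Mx/q⌋ - ∑ᵢ ⌊mᵢx/q⌋`. -/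
def D (m : Fin s → ℕ) (q x : ℕ) : ℤ :=
  (((∑ j, m j) * x) / q : ℕ) - ∑ i, (((m i * x) / q : ℕ) : ℤ)

lemma Dmod (m : Fin s → ℕ) {q : ℕ} (hq : 0 < q) (x : ℕ) :
    D m q x = D m q (x % q) := by
  have hc : ∀ c : ℕ, (c * x) / q = (c * (x % q)) / q + c * (x / q) := by
    intro c
    conv_lhs => rw [show c * x = c * (x % q) + c * (x / q) * q by
      conv_lhs => rw [show x = x % q + q * (x / q) from (Nat.mod_add_div x q).symm]
      ring]
    rw [Nat.add_mul_div_right _ _ hq]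
  unfold D
  rw [hc]
  have h2 : ∀ i : Fin s, ((m i * x) / q : ℕ) = (m i * (x % q)) / q + m i * (x / q) :=
    fun i => hc (m i)
  push_cast [h2]
  rw [Finset.sum_add_distrib, Finset.sum_mul]
  push_cast
  rw [Finset.sum_mul]
  ring

/-- Scaling invariance of `D`. -/
lemma Dscale (m : Fin s → ℕ) {c : ℕ} (hc : 0 < c) (q x : ℕ) :
    D m (c * q) (c * x) = D m q x := by
  unfold D
  have h : ∀ a : ℕ, (a * (c * x)) / (c * q) = (a * x) / q := by
    intro a
    rw [show a * (c * x) = c * (a * x) by ring, Nat.mul_div_mul_left _ _ hc]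
  rw [h]
  simp only [h]

/-- `D` vanishes when the argument is a multiple of the modulus. -/
lemma Dzero (m : Fin s → ℕ) {q : ℕ} (hq : 0 < q) (w : ℕ) :
    D m q (q * w) = 0 := by
  unfold D
  have h : ∀ a : ℕ, (a * (q * w)) / q = a * w := by
    intro a
    rw [show a * (q * w) = q * (a * w) by ring, Nat.mul_div_cancel_left _ hq]
  rw [h]
  simp only [h]
  push_cast
  rw [Finset.sum_mul]
  ring

/-- One step of monotonicity of `D` inside a period. -/
lemma Dstep (hs : 0 < s) (m : Fin s → ℕ) (hm : ∀ i, 0 < m i)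
    (hcop : ∀ i j, i ≠ j → Nat.Coprime (m i) (m j))
    (hdvd : ∀ i, m i ∣ ∑ j, m j)
    {q n : ℕ} (hq : n + 2 ≤ q) :
    D m q n ≤ D m q (n + 1) := by
  have hq0 : 0 < q := by omega
  set M := ∑ j, m j with hM
  have hMpos : 0 < M := by
    have := hm ⟨0, hs⟩
    have h1 : m ⟨0, hs⟩ ≤ M := Finset.single_le_sum (fun i _ => Nat.zero_le (m i)) (mem_univ _)
    omega
  have hmono : ∀ c : ℕ, (c * n) / q ≤ (c * (n + 1)) / q :=
    fun c => Nat.div_le_div_right (Nat.mul_le_mul_left _ (by omega))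
  set A : Fin s → Finset ℕ := fun i => Finset.Ioc ((m i * n) / q) ((m i * (n + 1)) / q) with hA
  set B : Finset ℕ := Finset.Ioc ((M * n) / q) ((M * (n + 1)) / q) with hB
  have hci : ∀ i, 0 < M / m i := fun i => Nat.div_pos (Nat.le_of_dvd hMpos (hdvd i)) (hm i)
  have hcim : ∀ i, (M / m i) * m i = M := fun i => Nat.div_mul_cancel (hdvd i)
  have hmemA : ∀ i a, a ∈ A i ↔ m i * n < a * q ∧ a * q ≤ m i * (n + 1) := by
    intro i a
    rw [hA, Finset.mem_Ioc]
    constructor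
    · rintro ⟨h1, h2⟩
      exact ⟨(Nat.div_lt_iff_lt_mul hq0).mp h1, (Nat.le_div_iff_mul_le hq0).mp h2⟩
    · rintro ⟨h1, h2⟩
      exact ⟨(Nat.div_lt_iff_lt_mul hq0).mpr h1, (Nat.le_div_iff_mul_le hq0).mpr h2⟩
  have hmemB : ∀ b, b ∈ B ↔ M * n < b * q ∧ b * q ≤ M * (n + 1) := by
    intro b
    rw [hB, Finset.mem_Ioc]
    constructor
    · rintro ⟨h1, h2⟩
      exact ⟨(Nat.div_lt_iff_lt_mul hq0).mp h1, (Nat.le_div_iff_mul_le hq0).mp h2⟩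
    · rintro ⟨h1, h2⟩
      exact ⟨(Nat.div_lt_iff_lt_mul hq0).mpr h1, (Nat.le_div_iff_mul_le hq0).mpr h2⟩
  have hapos : ∀ i a, a ∈ A i → 0 < a := by
    intro i a hai
    rcases (hmemA i a).mp hai with ⟨h1, _⟩
    rcases Nat.eq_zero_or_pos a with rfl | h
    · simp at h1
    · exact h
  have hcard : ∑ i, (A i).card ≤ B.card := by
    rw [← Finset.card_sigma]
    apply Finset.card_le_card_of_injOn (fun x => (M / m x.1) * x.2)
    · rintro ⟨i, a⟩ hx
      rw [Finset.mem_coe, Finset.mem_sigma] at hx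
      rcases (hmemA i a).mp hx.2 with ⟨h1, h2⟩
      rw [Finset.mem_coe, hmemB]
      constructor
      · calc M * n = (M / m i) * (m i * n) := by rw [← mul_assoc, hcim]
          _ < (M / m i) * (a * q) := by
              exact mul_lt_mul_of_pos_left h1 (hci i)
          _ = (M / m i) * a * q := by ring
      · calc (M / m i) * a * q = (M / m i) * (a * q) := by ring
          _ ≤ (M / m i) * (m i * (n + 1)) := Nat.mul_le_mul_left _ h2
          _ = M * (n + 1) := by rw [← mul_assoc, hcim]
    · rintro ⟨i, a⟩ hx ⟨i', a'⟩ hx' heq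
      simp only [Finset.coe_sigma, Set.mem_sigma_iff, Finset.mem_coe, Finset.mem_univ] at hx hx'
      simp only at heq
      rcases eq_or_ne i i' with rfl | hne
      · have : a = a' := Nat.eq_of_mul_eq_mul_left (hci i) heq
        subst this; rfl
      · exfalso
        have hb1 : M ∣ (M / m i * a) * m i := ⟨a, by rw [mul_right_comm, hcim]⟩
        have hb2 : M ∣ (M / m i * a) * m i' := ⟨a', by rw [heq, mul_right_comm, hcim]⟩
        have hMb : M ∣ M / m i * a := by
          have h3 := Nat.dvd_gcd hb1 hb2
          rwa [Nat.gcd_mul_left, hcop i i' hne, mul_one] at h3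
        have hbpos : 0 < M / m i * a := Nat.mul_pos (hci i) (hapos i a hx.2)
        have hMle : M ≤ M / m i * a := Nat.le_of_dvd hbpos hMb
        rcases (hmemA i a).mp hx.2 with ⟨_, h2⟩
        have h4 : (M / m i * a) * q ≤ M * (n + 1) := by
          calc (M / m i * a) * q = (M / m i) * (a * q) := by ring
            _ ≤ (M / m i) * (m i * (n + 1)) := Nat.mul_le_mul_left _ h2
            _ = M * (n + 1) := by rw [← mul_assoc, hcim]
        have h5 : M * (n + 1) < M * q := mul_lt_mul_of_pos_left (by omega) hMpos
        have h6 : M * q ≤ (M / m i * a) * q := Nat.mul_le_mul_right _ hMle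
        omega
  have hAcard : ∀ i, (A i).card = (m i * (n + 1)) / q - (m i * n) / q := by
    intro i; rw [hA]; simp [Nat.card_Ioc]
  have hBcard : B.card = (M * (n + 1)) / q - (M * n) / q := by
    rw [hB]; simp [Nat.card_Ioc]
  rw [hBcard] at hcard
  simp only [hAcard] at hcard
  unfold D
  rw [← hM]
  have hc2 : ((((M * (n + 1)) / q - (M * n) / q : ℕ)) : ℤ)
      = (((M * (n + 1)) / q : ℕ) : ℤ) - (((M * n) / q : ℕ) : ℤ) := by
    exact_mod_cast Nat.cast_sub (hmono M)
  have := (Nat.cast_le (α := ℤ)).mpr hcard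
  rw [Nat.cast_sum, hc2] at this
  have h7 : ∀ i : Fin s, ((((m i * (n + 1)) / q - (m i * n) / q : ℕ)) : ℤ)
      = (((m i * (n + 1)) / q : ℕ) : ℤ) - (((m i * n) / q : ℕ) : ℤ) :=
    fun i => by exact_mod_cast Nat.cast_sub (hmono (m i))
  simp only [h7] at this
  rw [Finset.sum_sub_distrib] at this
  linarith

lemma Dmono (hs : 0 < s) (m : Fin s → ℕ) (hm : ∀ i, 0 < m i)
    (hcop : ∀ i j, i ≠ j → Nat.Coprime (m i) (m j))
    (hdvd : ∀ i, m i ∣ ∑ j, m j)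
    {q a b : ℕ} (hab : a ≤ b) (hbq : b + 1 ≤ q) :
    D m q a ≤ D m q b := by
  induction b, hab using Nat.le_induction with
  | base => exact le_refl _
  | succ b hab ih =>
      exact le_trans (ih (by omega)) (Dstep hs m hm hcop hdvd (by omega))

/-- Sum of a `q`-periodic function over a full period with a coprime multiplier. -/
lemma Dperiod (D : ℕ → ℤ) (q : ℕ) (hq : 0 < q)
    (hDmod : ∀ x, D x = D (x % q))
    {c : ℕ} (hc : Nat.Coprime c q) (a : ℕ) :
    ∑ n ∈ Finset.Ioc a (a + q), D (c * n) = ∑ u ∈ Finset.range q, D u := by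
  have hinj : ∀ x ∈ Finset.Ioc a (a + q), ∀ y ∈ Finset.Ioc a (a + q),
      (c * x) % q = (c * y) % q → x = y := by
    intro x hx y hy hxy
    rw [Finset.mem_Ioc] at hx hy
    have hmod : x ≡ y [MOD q] := by
      have h1 : c * x ≡ c * y [MOD q] := hxy
      exact Nat.ModEq.cancel_left_of_coprime (by rwa [Nat.coprime_comm] at hc) h1
    rcases le_total x y with h | h
    · have hd := (Nat.modEq_iff_dvd' h).mp hmod
      have h0 := Nat.eq_zero_of_dvd_of_lt hd (by omega : y - x < q)
      omega
    · have hd := (Nat.modEq_iff_dvd' h).mp hmod.symm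
      have h0 := Nat.eq_zero_of_dvd_of_lt hd (by omega : x - y < q)
      omega
  have himg : (Finset.Ioc a (a + q)).image (fun n => (c * n) % q) = Finset.range q := by
    apply Finset.eq_of_subset_of_card_le
    · intro x hx
      rw [Finset.mem_image] at hx
      obtain ⟨n, _, rfl⟩ := hx
      exact Finset.mem_range.mpr (Nat.mod_lt _ hq)
    · rw [Finset.card_image_of_injOn (fun x hx y hy => hinj x hx y hy)]
      simp [Nat.card_Ioc]
  calc ∑ n ∈ Finset.Ioc a (a + q), D (c * n)
      = ∑ n ∈ Finset.Ioc a (a + q), D ((c * n) % q) := by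
        exact Finset.sum_congr rfl fun n _ => hDmod (c * n)
    _ = ∑ u ∈ (Finset.Ioc a (a + q)).image (fun n => (c * n) % q), D u :=
        (Finset.sum_image hinj).symm
    _ = ∑ u ∈ Finset.range q, D u := by rw [himg]

/-- Monotone rearrangement: a sum of a monotone function over a subset of `[1,q-1]`
dominates the initial-segment sum. -/
lemma sumR (D : ℕ → ℤ) (q : ℕ)
    (hmono : ∀ a b : ℕ, a ≤ b → b + 1 ≤ q → D a ≤ D b) :
    ∀ N : ℕ, ∀ S : Finset ℕ, S.card = N → S ⊆ Finset.Icc 1 (q - 1) →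
      ∑ n ∈ Finset.Icc 1 N, D n ≤ ∑ x ∈ S, D x := by
  intro N
  induction N with
  | zero =>
      intro S hS _
      rw [Finset.card_eq_zero] at hS
      subst hS
      simp
  | succ N ih =>
      intro S hS hsub
      have hne : S.Nonempty := Finset.card_pos.mp (by omega)
      set x := S.max' hne with hx
      have hxS : x ∈ S := S.max'_mem hne
      have hxIcc := hsub hxS
      rw [Finset.mem_Icc] at hxIcc
      have hcardle : S.card ≤ x := by
        have h1 : S ⊆ Finset.Icc 1 x := by
          intro y hy
          rw [Finset.mem_Icc]
          exact ⟨(Finset.mem_Icc.mp (hsub hy)).1, S.le_max' y hy⟩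
        calc S.card ≤ (Finset.Icc 1 x).card := Finset.card_le_card h1
          _ = x := by simp [Nat.card_Icc]
      have hq1 : 0 < q := by omega
      have hstep : D (N + 1) ≤ D x := hmono (N + 1) x (by omega) (by omega)
      have herase := ih (S.erase x) (by rw [Finset.card_erase_of_mem hxS, hS]; omega)
        (subset_trans (Finset.erase_subset _ _) hsub)
      rw [Finset.sum_Icc_succ_top (by omega : 1 ≤ N + 1)]
      rw [← Finset.sum_erase_add S _ hxS]
      omega

/-- The core rearrangement inequality for partial sums. -/
lemma core (D : ℕ → ℤ) (q : ℕ) (hq : 0 < q)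
    (hDmod : ∀ x, D x = D (x % q))
    (hmono : ∀ a b : ℕ, a ≤ b → b + 1 ≤ q → D a ≤ D b)
    {v : ℕ} (hv : Nat.Coprime v q) (t : ℕ) :
    ∑ n ∈ Finset.Ioc 0 t, D n ≤ ∑ n ∈ Finset.Ioc 0 t, D (v * n) := by
  induction t using Nat.strong_induction_on with
  | _ t ih =>
    rcases lt_or_ge t q with htq | htq
    · rcases Nat.eq_zero_or_pos t with rfl | ht0
      · simp
      have hinj : ∀ x ∈ Finset.Ioc 0 t, ∀ y ∈ Finset.Ioc 0 t,
          (v * x) % q = (v * y) % q → x = y := by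
        intro x hx y hy hxy
        rw [Finset.mem_Ioc] at hx hy
        have hmod : x ≡ y [MOD q] :=
          Nat.ModEq.cancel_left_of_coprime (by rwa [Nat.coprime_comm] at hv) hxy
        rcases le_total x y with h | h
        · have hd := (Nat.modEq_iff_dvd' h).mp hmod
          have h0 := Nat.eq_zero_of_dvd_of_lt hd (by omega : y - x < q)
          omega
        · have hd := (Nat.modEq_iff_dvd' h).mp hmod.symm
          have h0 := Nat.eq_zero_of_dvd_of_lt hd (by omega : x - y < q)
          omega
      set S := (Finset.Ioc 0 t).image (fun n => (v * n) % q) with hS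
      have hcard : S.card = t := by
        rw [hS, Finset.card_image_of_injOn (fun x hx y hy => hinj x hx y hy)]
        simp [Nat.card_Ioc]
      have hsub : S ⊆ Finset.Icc 1 (q - 1) := by
        intro x hx
        rw [hS, Finset.mem_image] at hx
        obtain ⟨n, hn, rfl⟩ := hx
        rw [Finset.mem_Ioc] at hn
        rw [Finset.mem_Icc]
        have hlt : (v * n) % q < q := Nat.mod_lt _ hq
        have hne : (v * n) % q ≠ 0 := by
          intro h0
          have hdq : q ∣ v * n := Nat.dvd_of_mod_eq_zero h0
          have : q ∣ n := (Nat.Coprime.dvd_of_dvd_mul_left (by rwa [Nat.coprime_comm] at hv) hdq)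
          have := Nat.le_of_dvd (by omega) this
          omega
        omega
      calc ∑ n ∈ Finset.Ioc 0 t, D n
          = ∑ n ∈ Finset.Icc 1 t, D n := by rw [← Finset.Icc_add_one_left_eq_Ioc, zero_add]
        _ ≤ ∑ x ∈ S, D x := sumR D q hmono t S hcard hsub
        _ = ∑ n ∈ Finset.Ioc 0 t, D ((v * n) % q) := Finset.sum_image hinj
        _ = ∑ n ∈ Finset.Ioc 0 t, D (v * n) :=
            Finset.sum_congr rfl fun n _ => (hDmod (v * n)).symm
    · have hsplit : ∀ f : ℕ → ℤ, ∑ n ∈ Finset.Ioc 0 (t - q), f n + ∑ n ∈ Finset.Ioc (t - q) t, f n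
          = ∑ n ∈ Finset.Ioc 0 t, f n := fun f =>
        Finset.sum_Ioc_consecutive f (by omega) (by omega)
      have hblock1 : ∑ n ∈ Finset.Ioc (t - q) t, D (v * n) = ∑ u ∈ Finset.range q, D u := by
        have := Dperiod D q hq hDmod hv (t - q)
        rwa [show t - q + q = t by omega] at this
      have hblock2 : ∑ n ∈ Finset.Ioc (t - q) t, D n = ∑ u ∈ Finset.range q, D u := by
        have := Dperiod D q hq hDmod (Nat.coprime_one_left q) (t - q)
        rw [show t - q + q = t by omega] at this
        rw [← this]
        exact Finset.sum_congr rfl fun n _ => by rw [one_mul]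
      have hih := ih (t - q) (by omega)
      rw [← hsplit (fun n => D n), ← hsplit (fun n => D (v * n))]
      rw [hblock1, hblock2]
      linarith

/-- Legendre-type formula for the valuation of the multinomial. -/
lemma val_formula (m : Fin s → ℕ) {p : ℕ} (hp : p.Prime) (N b : ℕ)
    (hb : Nat.log p ((∑ j, m j) * N) < b) :
    (((Nat.multinomial Finset.univ (fun i => m i * N)).factorization p : ℕ) : ℤ)
      = ∑ j ∈ Finset.Ico 1 b, D m (p ^ j) N := by
  haveI : Fact p.Prime := ⟨hp⟩
  set M := ∑ j, m j with hM
  have hspec : (∏ i, Nat.factorial (m i * N)) * Nat.multinomial Finset.univ (fun i => m i * N)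
      = Nat.factorial (M * N) := by
    rw [Nat.multinomial_spec, ← Finset.sum_mul]
  have hprodne : (∏ i, Nat.factorial (m i * N)) ≠ 0 :=
    Finset.prod_ne_zero_iff.mpr fun i _ => Nat.factorial_ne_zero _
  have hane : Nat.multinomial Finset.univ (fun i => m i * N) ≠ 0 :=
    (Nat.multinomial_pos _ _).ne'
  have h3 : ((∏ i, Nat.factorial (m i * N)) * Nat.multinomial Finset.univ
      (fun i => m i * N)).factorization p = (Nat.factorial (M * N)).factorization p := by
    rw [hspec]
  rw [Nat.factorization_mul hprodne hane, Finsupp.add_apply,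
    Nat.factorization_prod (fun i _ => Nat.factorial_ne_zero _), Finset.sum_apply'] at h3
  have hL : ∀ i : Fin s, (Nat.factorial (m i * N)).factorization p
      = ∑ j ∈ Finset.Ico 1 b, (m i * N) / p ^ j := by
    intro i
    rw [Nat.factorization_def _ hp]
    apply padicValNat_factorial
    have hmle : m i ≤ M := Finset.single_le_sum (fun i _ => Nat.zero_le (m i)) (mem_univ i)
    exact lt_of_le_of_lt (Nat.log_mono_right (Nat.mul_le_mul_right _ hmle)) hb
  have hLM : (Nat.factorial (M * N)).factorization p = ∑ j ∈ Finset.Ico 1 b, (M * N) / p ^ j := by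
    rw [Nat.factorization_def _ hp]
    exact padicValNat_factorial hb
  rw [hLM] at h3
  simp only [hL] at h3
  have h4 := congrArg (fun x : ℕ => (x : ℤ)) h3
  push_cast at h4
  rw [Finset.sum_comm] at h4
  unfold D
  rw [Finset.sum_sub_distrib]
  rw [← hM]
  push_cast
  linarith

end AkiyamaAux

/-- **Theorem 3 (Akiyama).** If `m₁,…,m_s` are pairwise coprime and each `mᵢ` divides
`m₁+⋯+m_s`, then the multinomial sequence `a n = ((m₁+⋯+m_s)n)! / ((m₁n)!⋯(m_sn)!)`
is mean divisible: `∏_{n=1}^t a n ∣ ∏_{n=1}^t a (k*n)` for all positive `k` and `t`. -/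
theorem multinomial_mean_divisible
    (s : ℕ) (hs : 0 < s) (m : Fin s → ℕ) (hm : ∀ i, 0 < m i)
    (hcop : ∀ i j, i ≠ j → Nat.Coprime (m i) (m j))
    (hdvd : ∀ i, m i ∣ ∑ j, m j)
    (a : ℕ → ℕ) (ha : ∀ n, a n = Nat.multinomial Finset.univ (fun i => m i * n))
    (k t : ℕ) (hk : 1 ≤ k) (ht : 1 ≤ t) :
    (∏ n ∈ Finset.Icc 1 t, a n) ∣ ∏ n ∈ Finset.Icc 1 t, a (k * n) := by
  classical
  have hane : ∀ N, a N ≠ 0 := fun N => by rw [ha]; exact (Nat.multinomial_pos _ _).ne'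
  have hP1 : (∏ n ∈ Finset.Icc 1 t, a n) ≠ 0 :=
    Finset.prod_ne_zero_iff.mpr fun n _ => hane n
  have hP2 : (∏ n ∈ Finset.Icc 1 t, a (k * n)) ≠ 0 :=
    Finset.prod_ne_zero_iff.mpr fun n _ => hane _
  rw [← Nat.factorization_le_iff_dvd hP1 hP2]
  rw [Nat.factorization_prod (fun n _ => hane n), Nat.factorization_prod (fun n _ => hane _)]
  rw [Finsupp.le_def]
  intro p
  rw [Finset.sum_apply', Finset.sum_apply']
  by_cases hp : p.Prime
  swap
  · simp [Nat.factorization_eq_zero_of_not_prime _ hp]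
  set κ := k.factorization p with hκ
  set v := k / p ^ κ with hvdef
  have hk0 : k ≠ 0 := by omega
  have hkfac : p ^ κ * v = k := Nat.ordProj_mul_ordCompl_eq_self k p
  have hpv : ¬ p ∣ v := Nat.not_dvd_ordCompl hp hk0
  have hvcop : Nat.Coprime p v := (Nat.Prime.coprime_iff_not_dvd hp).mpr hpv
  set b := Nat.log p ((∑ j, m j) * (k * t)) + 1 with hbdef
  rw [← Nat.cast_le (α := ℤ), Nat.cast_sum, Nat.cast_sum]
  have hlogbound : ∀ N : ℕ, N ≤ k * t → Nat.log p ((∑ j, m j) * N) < b := by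
    intro N hN
    have h1 : (∑ j, m j) * N ≤ (∑ j, m j) * (k * t) := Nat.mul_le_mul_left _ hN
    have := Nat.log_mono_right (b := p) h1
    omega
  have hform1 : ∀ n ∈ Finset.Icc 1 t, (((a n).factorization p : ℕ) : ℤ)
      = ∑ j ∈ Finset.Ico 1 b, AkiyamaAux.D m (p ^ j) n := by
    intro n hn
    rw [Finset.mem_Icc] at hn
    rw [ha n]
    apply AkiyamaAux.val_formula m hp
    apply hlogbound
    calc n ≤ t := hn.2
      _ ≤ k * t := Nat.le_mul_of_pos_left t (by omega)
  have hform2 : ∀ n ∈ Finset.Icc 1 t, (((a (k * n)).factorization p : ℕ) : ℤ)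
      = ∑ j ∈ Finset.Ico 1 (b + κ), AkiyamaAux.D m (p ^ j) (k * n) := by
    intro n hn
    rw [Finset.mem_Icc] at hn
    rw [ha (k * n)]
    apply AkiyamaAux.val_formula m hp
    have h1 : Nat.log p ((∑ j, m j) * (k * n)) < b :=
      hlogbound _ (Nat.mul_le_mul_left _ hn.2)
    omega
  have hshift : ∀ n : ℕ, ∑ j ∈ Finset.Ico 1 (b + κ), AkiyamaAux.D m (p ^ j) (k * n)
      = ∑ j ∈ Finset.Ico 1 b, AkiyamaAux.D m (p ^ j) (v * n) := by
    intro n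
    have hsplit := Finset.sum_Ico_consecutive (fun j => AkiyamaAux.D m (p ^ j) (k * n))
      (show 1 ≤ 1 + κ by omega) (show 1 + κ ≤ b + κ by omega)
    have hz : ∑ j ∈ Finset.Ico 1 (1 + κ), AkiyamaAux.D m (p ^ j) (k * n) = 0 := by
      apply Finset.sum_eq_zero
      intro j hj
      rw [Finset.mem_Ico] at hj
      have hkn : k * n = p ^ j * (p ^ (κ - j) * (v * n)) := by
        rw [← hkfac, show p ^ j * (p ^ (κ - j) * (v * n)) = (p ^ j * p ^ (κ - j)) * (v * n) by
          ring, ← pow_add, show j + (κ - j) = κ by omega]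
        ring
      rw [hkn]
      exact AkiyamaAux.Dzero m (pow_pos hp.pos j) _
    have hs2 : ∑ j ∈ Finset.Ico (1 + κ) (b + κ), AkiyamaAux.D m (p ^ j) (k * n)
        = ∑ j ∈ Finset.Ico 1 b, AkiyamaAux.D m (p ^ j) (v * n) := by
      rw [← Finset.sum_Ico_add (fun j => AkiyamaAux.D m (p ^ j) (k * n)) 1 b κ]
      apply Finset.sum_congr rfl
      intro j hj
      have : AkiyamaAux.D m (p ^ (κ + j)) (k * n) = AkiyamaAux.D m (p ^ j) (v * n) := by
        rw [show p ^ (κ + j) = p ^ κ * p ^ j from pow_add p κ j,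
          show k * n = p ^ κ * (v * n) by rw [← hkfac]; ring]
        exact AkiyamaAux.Dscale m (pow_pos hp.pos κ) _ _
      exact this
    linarith [hsplit, hz, hs2]
  calc ∑ n ∈ Finset.Icc 1 t, (((a n).factorization p : ℕ) : ℤ)
      = ∑ n ∈ Finset.Icc 1 t, ∑ j ∈ Finset.Ico 1 b, AkiyamaAux.D m (p ^ j) n :=
        Finset.sum_congr rfl hform1
    _ = ∑ j ∈ Finset.Ico 1 b, ∑ n ∈ Finset.Icc 1 t, AkiyamaAux.D m (p ^ j) n :=
        Finset.sum_comm
    _ ≤ ∑ j ∈ Finset.Ico 1 b, ∑ n ∈ Finset.Icc 1 t, AkiyamaAux.D m (p ^ j) (v * n) := by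
        apply Finset.sum_le_sum
        intro j hj
        have hq : 0 < p ^ j := pow_pos hp.pos j
        have hcopvq : Nat.Coprime v (p ^ j) := Nat.Coprime.pow_right j hvcop.symm
        have h := AkiyamaAux.core (AkiyamaAux.D m (p ^ j)) (p ^ j) hq
          (AkiyamaAux.Dmod m hq)
          (fun x y hxy hyq => AkiyamaAux.Dmono hs m hm hcop hdvd hxy hyq) hcopvq t
        rw [show Finset.Icc 1 t = Finset.Ioc 0 t from Finset.Icc_add_one_left_eq_Ioc 0 t]
        exact h
    _ = ∑ n ∈ Finset.Icc 1 t, ∑ j ∈ Finset.Ico 1 b, AkiyamaAux.D m (p ^ j) (v * n) :=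
        Finset.sum_comm
    _ = ∑ n ∈ Finset.Icc 1 t, ∑ j ∈ Finset.Ico 1 (b + κ), AkiyamaAux.D m (p ^ j) (k * n) :=
        Finset.sum_congr rfl fun n _ => (hshift n).symm
    _ = ∑ n ∈ Finset.Icc 1 t, (((a (k * n)).factorization p : ℕ) : ℤ) :=
        (Finset.sum_congr rfl hform2).symm
end

section
/- The set of denominators (in lowest terms) of the rational numbers (∏_{n=1}^t binom(8n, 4n)) / (∏_{n=1}^t binom(4n, 2n)), as t ranges over the positive integers, is infinite. Equivalently, there is no positive integer C such that C · ∏_{n=1}^t binom(8n, 4n) is divisible by ∏_{n=1}^t binom(4n, 2n) for all positive integers t. -/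
open Finset

private lemma zmod8_mod {p : ℕ} (h : (p : ZMod 8) = 3) : p % 8 = 3 := by
  have : p % 8 = (p : ZMod 8).val := (ZMod.val_natCast (n := 8) p).symm
  rw [this, h]; rfl

/-- Kummer for a central binomial coefficient below `p^2`. -/
private lemma val_central (p m : ℕ) [hp : Fact p.Prime] (hm : 0 < m) (h2 : 2 * m < p ^ 2) :
    padicValNat p ((2 * m).choose m) = if p ≤ 2 * (m % p) then 1 else 0 := by
  have hlog : Nat.log p (2 * m) < 2 := Nat.log_lt_of_lt_pow (by omega) h2
  rw [padicValNat_choose (n := 2 * m) (k := m) (b := 2) (by omega) hlog]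
  have h1 : Finset.Ico 1 2 = {1} := rfl
  rw [h1, Finset.filter_singleton]
  have h3 : 2 * m - m = m := by omega
  simp only [pow_one, h3]
  by_cases hc : p ≤ m % p + m % p
  · rw [if_pos hc, if_pos (by omega)]; rfl
  · rw [if_neg hc, if_neg (by omega)]; rfl

private lemma prod_val (p : ℕ) (hp : p.Prime) (h8 : p % 8 = 3) :
    (∏ n ∈ Finset.Icc 1 (3 * (p / 8) + 1), Nat.choose (4 * n) (2 * n)).factorization p
      = p / 8 + 1 ∧
    (∏ n ∈ Finset.Icc 1 (3 * (p / 8) + 1), Nat.choose (8 * n) (4 * n)).factorization p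
      = p / 8 := by
  haveI : Fact p.Prime := ⟨hp⟩
  set k := p / 8 with hk
  have hpk : p = 8 * k + 3 := by omega
  constructor
  · have hD : ∀ n ∈ Finset.Icc 1 (3 * k + 1),
        (Nat.choose (4 * n) (2 * n)).factorization p = if 2 * k + 1 ≤ n then 1 else 0 := by
      intro n hn
      simp only [Finset.mem_Icc] at hn
      rw [Nat.factorization_def _ hp]
      have h4 : 4 * n = 2 * (2 * n) := by ring
      have hlt : 2 * (2 * n) < p ^ 2 := by
        have h1 : 2 * (2 * n) ≤ 12 * k + 4 := by omega
        have h2 : 12 * k + 4 < (8 * k + 3) ^ 2 := by nlinarith [sq_nonneg k]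
        rw [hpk]; omega
      rw [h4, val_central p (2 * n) (by omega) hlt,
        Nat.mod_eq_of_lt (by omega : 2 * n < p)]
      by_cases hc : 2 * k + 1 ≤ n
      · rw [if_pos (by omega), if_pos hc]
      · rw [if_neg (by omega), if_neg hc]
    have hne : ∀ n ∈ Finset.Icc 1 (3 * k + 1), Nat.choose (4 * n) (2 * n) ≠ 0 :=
      fun n _ => (Nat.choose_pos (by omega)).ne'
    rw [Nat.factorization_prod hne, Finset.sum_apply', Finset.sum_congr rfl hD,
      Finset.sum_boole]
    have hfil : (Finset.Icc 1 (3 * k + 1)).filter (fun n => 2 * k + 1 ≤ n)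
        = Finset.Icc (2 * k + 1) (3 * k + 1) := by
      ext n; simp [Finset.mem_filter, Finset.mem_Icc]; omega
    rw [hfil, Nat.card_Icc]; simp only [Nat.cast_id]; omega
  · have hN : ∀ n ∈ Finset.Icc 1 (3 * k + 1),
        (Nat.choose (8 * n) (4 * n)).factorization p
          = if k + 1 ≤ n ∧ n ≤ 2 * k then 1 else 0 := by
      intro n hn
      simp only [Finset.mem_Icc] at hn
      rw [Nat.factorization_def _ hp]
      have h4 : 8 * n = 2 * (4 * n) := by ring
      have hlt : 2 * (4 * n) < p ^ 2 := by
        have h1 : 2 * (4 * n) ≤ 24 * k + 8 := by omega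
        have h2 : 24 * k + 8 < (8 * k + 3) ^ 2 := by nlinarith [sq_nonneg k]
        rw [hpk]; omega
      rw [h4, val_central p (4 * n) (by omega) hlt]
      by_cases hn2 : n ≤ 2 * k
      · rw [Nat.mod_eq_of_lt (by omega : 4 * n < p)]
        by_cases hc : k + 1 ≤ n
        · rw [if_pos (by omega), if_pos ⟨hc, hn2⟩]
        · rw [if_neg (by omega), if_neg (by omega)]
      · have hmod : 4 * n % p = 4 * n - p := by
          rw [Nat.mod_eq_sub_mod (by omega : p ≤ 4 * n),
            Nat.mod_eq_of_lt (by omega : 4 * n - p < p)]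
        rw [hmod, if_neg (by omega), if_neg (by omega)]
    have hne : ∀ n ∈ Finset.Icc 1 (3 * k + 1), Nat.choose (8 * n) (4 * n) ≠ 0 :=
      fun n _ => (Nat.choose_pos (by omega)).ne'
    rw [Nat.factorization_prod hne, Finset.sum_apply', Finset.sum_congr rfl hN,
      Finset.sum_boole]
    have hfil : (Finset.Icc 1 (3 * k + 1)).filter (fun n => k + 1 ≤ n ∧ n ≤ 2 * k)
        = Finset.Icc (k + 1) (2 * k) := by
      ext n; simp [Finset.mem_filter, Finset.mem_Icc]; omega
    rw [hfil, Nat.card_Icc]; simp only [Nat.cast_id]; omega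

private lemma exists_prime (m : ℕ) : ∃ p : ℕ, p.Prime ∧ p % 8 = 3 ∧ m < p := by
  obtain ⟨p, hgt, hp, hmod⟩ :=
    Nat.forall_exists_prime_gt_and_eq_mod (q := 8) (a := 3) (by decide) m
  exact ⟨p, hp, zmod8_mod hmod, hgt⟩

/-- The denominators of `(∏_{n=1}^t binom(8n,4n)) / (∏_{n=1}^t binom(4n,2n))` for
`t = 1, 2, …` form an infinite set; equivalently, there is no positive integer `C` such that
`∏_{n=1}^t binom(4n,2n)` divides `C * ∏_{n=1}^t binom(8n,4n)` for all positive `t`. -/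
theorem no_uniform_denominator_choose_eight_four :
    (¬ ∃ C : ℕ, 0 < C ∧ ∀ t : ℕ, 1 ≤ t →
        (∏ n ∈ Finset.Icc 1 t, Nat.choose (4 * n) (2 * n)) ∣
          C * ∏ n ∈ Finset.Icc 1 t, Nat.choose (8 * n) (4 * n)) ∧
    {d : ℕ | ∃ t : ℕ, 1 ≤ t ∧
        d = (((∏ n ∈ Finset.Icc 1 t, Nat.choose (8 * n) (4 * n) : ℕ) : ℚ) /
              ((∏ n ∈ Finset.Icc 1 t, Nat.choose (4 * n) (2 * n) : ℕ) : ℚ)).den}.Infinite := by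
  constructor
  · rintro ⟨C, hC, hdvd⟩
    obtain ⟨p, hp, h8, hpC⟩ := exists_prime C
    haveI : Fact p.Prime := ⟨hp⟩
    set k := p / 8 with hk
    obtain ⟨hDv, hNv⟩ := prod_val p hp h8
    have ht := hdvd (3 * k + 1) (by omega)
    have hD0 : (∏ n ∈ Finset.Icc 1 (3 * k + 1), Nat.choose (4 * n) (2 * n)) ≠ 0 :=
      (Finset.prod_pos fun n _ => Nat.choose_pos (by omega)).ne'
    have hN0 : (∏ n ∈ Finset.Icc 1 (3 * k + 1), Nat.choose (8 * n) (4 * n)) ≠ 0 :=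
      (Finset.prod_pos fun n _ => Nat.choose_pos (by omega)).ne'
    have hle := (Nat.factorization_le_iff_dvd hD0 (mul_ne_zero (by omega) hN0)).mpr ht
    have h2 := Finsupp.le_def.mp hle p
    rw [Nat.factorization_mul (by omega) hN0, Finsupp.add_apply, hDv, hNv,
      Nat.factorization_eq_zero_of_not_dvd
        (fun hd => absurd (Nat.le_of_dvd hC hd) (by omega))] at h2
    omega
  · apply Set.infinite_of_forall_exists_gt
    intro m
    obtain ⟨p, hp, h8, hpm⟩ := exists_prime m
    haveI : Fact p.Prime := ⟨hp⟩
    set k := p / 8 with hk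
    obtain ⟨hDv, hNv⟩ := prod_val p hp h8
    set D : ℕ := ∏ n ∈ Finset.Icc 1 (3 * k + 1), Nat.choose (4 * n) (2 * n) with hD
    set N : ℕ := ∏ n ∈ Finset.Icc 1 (3 * k + 1), Nat.choose (8 * n) (4 * n) with hN
    have hD0 : D ≠ 0 := (Finset.prod_pos fun n _ => Nat.choose_pos (by omega)).ne'
    have hN0 : N ≠ 0 := (Finset.prod_pos fun n _ => Nat.choose_pos (by omega)).ne'
    set q : ℚ := (N : ℚ) / (D : ℚ) with hq
    refine ⟨q.den, ⟨3 * k + 1, by omega, rfl⟩, ?_⟩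
    -- it suffices to show `p ∣ q.den`
    have hdvdden : p ∣ q.den := by
      have hval : padicValRat p q = (k : ℤ) - (k + 1 : ℤ) := by
        rw [hq, padicValRat.div (p := p) (by exact_mod_cast hN0) (by exact_mod_cast hD0),
          padicValRat.of_nat, padicValRat.of_nat,
          ← Nat.factorization_def N hp, ← Nat.factorization_def D hp, hNv, hDv]
        push_cast; ring
      by_contra hnd
      have hden0 : padicValNat p q.den = 0 := padicValNat.eq_zero_of_not_dvd hnd
      rw [padicValRat_def, hden0] at hval
      omega
    have hdenpos : 0 < q.den := q.pos
    calc m < p := hpm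
      _ ≤ q.den := Nat.le_of_dvd hdenpos hdvdden
end

section
/- For all positive integers k and t, the product ∏_{n=1}^t binom(2n, n) divides the product ∏_{n=1}^t binom(2kn, kn). -/
open Finset

namespace ProdCB

/-- Number of `n ∈ [1, t]` such that `k*n mod q` lies in the upper half of `[0,q)`. -/
def cnt (k q t : ℕ) : ℕ := ((Finset.Icc 1 t).filter (fun n => q ≤ 2 * (k * n % q))).card

lemma eq_of_mod_eq_Ioc {q a r n1 n2 : ℕ} (hr : r ≤ q)
    (h1 : n1 ∈ Finset.Ioc a (a + r)) (h2 : n2 ∈ Finset.Ioc a (a + r))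
    (h : n1 % q = n2 % q) : n1 = n2 := by
  simp only [Finset.mem_Ioc] at h1 h2
  rcases le_total n1 n2 with hle | hle
  · have hd : q ∣ n2 - n1 := (Nat.modEq_iff_dvd' hle).mp h
    rcases Nat.eq_zero_or_pos (n2 - n1) with h0 | h0
    · omega
    · have := Nat.le_of_dvd h0 hd; omega
  · have hd : q ∣ n1 - n2 := (Nat.modEq_iff_dvd' hle).mp h.symm
    rcases Nat.eq_zero_or_pos (n1 - n2) with h0 | h0
    · omega
    · have := Nat.le_of_dvd h0 hd; omega

lemma injOn_mul_mod {k q : ℕ} (hco : Nat.Coprime k q) {a r : ℕ} (hr : r ≤ q) :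
    Set.InjOn (fun n => k * n % q) (Finset.Ioc a (a + r) : Finset ℕ) := by
  intro n1 h1 n2 h2 h
  simp only [Finset.coe_Ioc, Set.mem_Ioc] at h1 h2
  have hmod : n1 ≡ n2 [MOD q] :=
    Nat.ModEq.cancel_left_of_coprime (Nat.coprime_comm.mp hco) (h : k * n1 % q = k * n2 % q)
  exact eq_of_mod_eq_Ioc hr (Finset.mem_Ioc.mpr h1) (Finset.mem_Ioc.mpr h2) hmod

lemma image_full {k q a : ℕ} (hq : 0 < q) (hco : Nat.Coprime k q) :
    (Finset.Ioc a (a + q)).image (fun n => k * n % q) = Finset.range q := by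
  apply Finset.eq_of_subset_of_card_le
  · intro r hr
    simp only [Finset.mem_image] at hr
    obtain ⟨n, _, rfl⟩ := hr
    exact Finset.mem_range.mpr (Nat.mod_lt _ hq)
  · rw [Finset.card_range, Finset.card_image_of_injOn (injOn_mul_mod hco le_rfl),
      Nat.card_Ioc]
    omega

lemma blockcount {k q a : ℕ} (hq : 0 < q) (hco : Nat.Coprime k q) :
    ((Finset.Ioc a (a + q)).filter (fun n => q ≤ 2 * (k * n % q))).card
      = ((Finset.range q).filter (fun r => q ≤ 2 * r)).card := by
  have himg := Finset.filter_image (s := Finset.Ioc a (a + q))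
      (f := fun n => k * n % q) (p := fun r => q ≤ 2 * r)
  rw [image_full hq hco] at himg
  rw [himg, Finset.card_image_of_injOn
    ((injOn_mul_mod hco le_rfl).mono (by exact_mod_cast Finset.filter_subset _ _))]

lemma cnt_base {k q t : ℕ} (hq : 0 < q) (hco : Nat.Coprime k q) (ht : t < q) :
    cnt 1 q t ≤ cnt k q t := by
  unfold cnt
  rw [show (1:ℕ) = 0 + 1 from rfl, Finset.Icc_add_one_left_eq_Ioc]
  set f := fun n => k * n % q with hf
  set I := (Finset.Ioc 0 t).image f with hI
  -- the image has t elements and avoids 0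
  have hinj : Set.InjOn f (Finset.Ioc 0 t : Finset ℕ) := by
    have := injOn_mul_mod hco (a := 0) (r := t) ht.le
    simpa using this
  have hcardI : I.card = t := by
    rw [hI, Finset.card_image_of_injOn hinj, Nat.card_Ioc]
    omega
  have hI0 : ∀ r ∈ I, 1 ≤ r ∧ r < q := by
    intro r hr
    rw [hI, Finset.mem_image] at hr
    obtain ⟨n, hn, rfl⟩ := hr
    simp only [Finset.mem_Ioc] at hn
    constructor
    · rcases Nat.eq_zero_or_pos (f n) with h0 | h0
      · exfalso
        have : q ∣ k * n := Nat.dvd_of_mod_eq_zero h0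
        have : q ∣ n := (Nat.Coprime.dvd_of_dvd_mul_left
          (Nat.coprime_comm.mp hco) this)
        have := Nat.le_of_dvd (by omega) this
        omega
      · exact h0
    · exact Nat.mod_lt _ hq
  -- LHS simplification : n % q = n on [1,t]
  have hLHS : ((Finset.Ioc 0 t).filter (fun n => q ≤ 2 * (1 * n % q))).card
      = ((Finset.Ioc 0 t).filter (fun n => q ≤ 2 * n)).card := by
    congr 1
    apply Finset.filter_congr
    intro n hn
    simp only [Finset.mem_Ioc] at hn
    rw [one_mul, Nat.mod_eq_of_lt (by omega)]
  -- RHS as count in image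
  have hRHS : ((Finset.Ioc 0 t).filter (fun n => q ≤ 2 * (k * n % q))).card
      = (I.filter (fun r => q ≤ 2 * r)).card := by
    have himg := Finset.filter_image (s := Finset.Ioc 0 t)
        (f := f) (p := fun r => q ≤ 2 * r)
    rw [← hI] at himg
    rw [himg, Finset.card_image_of_injOn
      (hinj.mono (by exact_mod_cast Finset.filter_subset _ _))]
  rw [hLHS, hRHS]
  have h1 := Finset.card_filter_add_card_filter_not
    (s := Finset.Ioc 0 t) (p := fun n => q ≤ 2 * n)
  have h2 := Finset.card_filter_add_card_filter_not
    (s := I) (p := fun r => q ≤ 2 * r)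
  rw [Nat.card_Ioc] at h1
  rw [hcardI] at h2
  -- key : bad count in image ≤ bad count in Ioc 0 t
  have hkey : (I.filter (fun r => ¬ q ≤ 2 * r)).card
      ≤ ((Finset.Ioc 0 t).filter (fun n => ¬ q ≤ 2 * n)).card := by
    by_cases h2t : q ≤ 2 * t
    · apply Finset.card_le_card
      intro r hr
      simp only [Finset.mem_filter] at hr ⊢
      obtain ⟨hrI, hrbad⟩ := hr
      have := hI0 r hrI
      refine ⟨Finset.mem_Ioc.mpr ⟨by omega, by omega⟩, hrbad⟩
    · have : ((Finset.Ioc 0 t).filter (fun n => ¬ q ≤ 2 * n)) = Finset.Ioc 0 t := by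
        apply Finset.filter_true_of_mem
        intro n hn
        simp only [Finset.mem_Ioc] at hn
        omega
      rw [this, Nat.card_Ioc]
      calc (I.filter (fun r => ¬ q ≤ 2 * r)).card ≤ I.card :=
            Finset.card_filter_le _ _
        _ = t - 0 := by rw [hcardI]; omega
  omega

lemma cnt_step {k q t : ℕ} (hq : 0 < q) (hco : Nat.Coprime k q) (hqt : q ≤ t) :
    cnt k q t = cnt k q (t - q) + ((Finset.range q).filter (fun r => q ≤ 2 * r)).card := by
  unfold cnt
  rw [show (1:ℕ) = 0 + 1 from rfl, Finset.Icc_add_one_left_eq_Ioc, Finset.Icc_add_one_left_eq_Ioc]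
  rw [← Finset.Ioc_union_Ioc_eq_Ioc (Nat.zero_le (t - q)) (Nat.sub_le t q),
    Finset.filter_union, Finset.card_union_of_disjoint]
  · congr 1
    have : Finset.Ioc (t - q) t = Finset.Ioc (t - q) ((t - q) + q) := by
      rw [Nat.sub_add_cancel hqt]
    rw [this]
    exact blockcount hq hco
  · apply Finset.disjoint_filter_filter
    rw [Finset.disjoint_left]
    intro n h1 h2
    simp only [Finset.mem_Ioc] at h1 h2
    omega

lemma cnt_le {k q : ℕ} (hq : 0 < q) (hco : Nat.Coprime k q) :
    ∀ t, cnt 1 q t ≤ cnt k q t := by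
  intro t
  induction t using Nat.strong_induction_on with
  | _ t ih =>
    by_cases ht : t < q
    · exact cnt_base hq hco ht
    · push_neg at ht
      rw [cnt_step hq hco ht, cnt_step hq (Nat.coprime_one_left q) ht]
      exact Nat.add_le_add_right (ih (t - q) (by omega)) _

lemma cnt_shift {p a j k' t : ℕ} (hp : 0 < p) :
    cnt (p ^ a * k') (p ^ (a + j)) t = cnt k' (p ^ j) t := by
  unfold cnt
  congr 1
  apply Finset.filter_congr
  intro n _
  have hmod : p ^ a * k' * n % p ^ (a + j) = p ^ a * (k' * n % p ^ j) := by
    rw [pow_add, mul_assoc, Nat.mul_mod_mul_left]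
  rw [hmod, pow_add]
  have hpa : 0 < p ^ a := Nat.pow_pos hp
  constructor
  · intro h
    have : p ^ a * p ^ j ≤ p ^ a * (2 * (k' * n % p ^ j)) := by
      rw [mul_left_comm] at h; exact h
    exact le_of_mul_le_mul_left this hpa
  · intro h
    rw [mul_left_comm]
    exact Nat.mul_le_mul_left _ h

lemma cnt_zero {k q t : ℕ} (hq : 0 < q) (hdvd : q ∣ k) : cnt k q t = 0 := by
  unfold cnt
  rw [Finset.card_eq_zero, Finset.filter_eq_empty_iff]
  intro n _
  have h0 : k * n % q = 0 := Nat.dvd_iff_mod_eq_zero.mp (hdvd.mul_right n)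
  rw [h0]
  omega

lemma cnt_vanish {k q t : ℕ} (h : 2 * (k * t) < q) : cnt k q t = 0 := by
  unfold cnt
  rw [Finset.card_eq_zero, Finset.filter_eq_empty_iff]
  intro n hn
  simp only [Finset.mem_Icc] at hn
  have h1 : k * n % q ≤ k * n := Nat.mod_le _ _
  have h2 : k * n ≤ k * t := Nat.mul_le_mul_left k hn.2
  omega

lemma sum_cnt_le {p : ℕ} (hp : p.Prime) {k t c : ℕ} (hk : 0 < k) (ht : 0 < t)
    (hc : 2 * (k * t) < p ^ c) :
    ∑ i ∈ Finset.Ico 1 (k.factorization p + c), cnt 1 (p ^ i) t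
      ≤ ∑ i ∈ Finset.Ico 1 (k.factorization p + c), cnt k (p ^ i) t := by
  set a := k.factorization p with ha
  set k' := k / p ^ a with hk'def
  have hpp : 0 < p := hp.pos
  have hkeq : p ^ a * k' = k := Nat.ordProj_mul_ordCompl_eq_self k p
  have hco : Nat.Coprime p k' := Nat.coprime_ordCompl hp hk.ne'
  have hc1 : 1 ≤ c := by
    rcases Nat.eq_zero_or_pos c with rfl | h
    · rw [pow_zero] at hc
      have := Nat.mul_pos hk ht
      omega
    · exact h
  have hLHS : ∑ i ∈ Finset.Ico 1 (a + c), cnt 1 (p ^ i) t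
      = ∑ i ∈ Finset.Ico 1 c, cnt 1 (p ^ i) t := by
    rw [← Finset.sum_Ico_consecutive _ hc1 (by omega : c ≤ a + c)]
    have hz : ∑ i ∈ Finset.Ico c (a + c), cnt 1 (p ^ i) t = 0 := by
      apply Finset.sum_eq_zero
      intro i hi
      simp only [Finset.mem_Ico] at hi
      apply cnt_vanish
      have h1 : 2 * (1 * t) ≤ 2 * (k * t) :=
        Nat.mul_le_mul_left 2 (Nat.mul_le_mul_right t hk)
      have h2 : p ^ c ≤ p ^ i := Nat.pow_le_pow_right hpp hi.1
      omega
    rw [hz, add_zero]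
  rw [hLHS]
  calc ∑ i ∈ Finset.Ico 1 c, cnt 1 (p ^ i) t
      ≤ ∑ i ∈ Finset.Ico 1 c, cnt k' (p ^ i) t := by
        apply Finset.sum_le_sum
        intro i _
        exact cnt_le (Nat.pow_pos hpp)
          (Nat.Coprime.pow_right i (Nat.coprime_comm.mp hco)) t
    _ = ∑ i ∈ Finset.Ico (a + 1) (a + c), cnt k (p ^ i) t := by
        rw [Finset.sum_Ico_eq_sum_range, Finset.sum_Ico_eq_sum_range]
        have hcc : a + c - (a + 1) = c - 1 := by omega
        rw [hcc]
        apply Finset.sum_congr rfl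
        intro i _
        have h3 : a + 1 + i = a + (1 + i) := by omega
        rw [h3, ← hkeq, cnt_shift hpp]
    _ ≤ ∑ i ∈ Finset.Ico 1 (a + c), cnt k (p ^ i) t := by
        apply Finset.sum_le_sum_of_subset
        intro i hi
        simp only [Finset.mem_Ico] at hi ⊢
        omega

lemma kummer {p : ℕ} (hp : p.Prime) {m b : ℕ} (hm : 0 < m) (hmb : 2 * m < p ^ b) :
    ((2 * m).choose m).factorization p
      = ((Finset.Ico 1 b).filter (fun i => p ^ i ≤ 2 * (m % p ^ i))).card := by
  have hkn : m ≤ 2 * m := by omega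
  have hlog : Nat.log p (2 * m) < b := Nat.log_lt_of_lt_pow (by omega) hmb
  have h := Nat.Prime.emultiplicity_choose hp hkn hlog
  haveI : Fact p.Prime := ⟨hp⟩
  have h2 := padicValNat_eq_emultiplicity (p := p) (Nat.choose_pos hkn).ne'
  rw [Nat.factorization_def _ hp]
  rw [h] at h2
  have hcond : ((Finset.Ico 1 b).filter fun i => p ^ i ≤ m % p ^ i + (2 * m - m) % p ^ i)
      = ((Finset.Ico 1 b).filter fun i => p ^ i ≤ 2 * (m % p ^ i)) := by
    apply Finset.filter_congr
    intro i _
    have h4 : 2 * m - m = m := by omega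
    rw [h4, two_mul]
  rw [hcond] at h2
  exact_mod_cast h2

end ProdCB

/-- For all positive integers `k` and `t`, `∏_{n=1}^t binom(2n, n)` divides
`∏_{n=1}^t binom(2kn, kn)`. -/
theorem prod_centralBinom_div (k t : ℕ) (hk : 1 ≤ k) (ht : 1 ≤ t) :
    (∏ n ∈ Finset.Icc 1 t, Nat.choose (2 * n) n) ∣
      ∏ n ∈ Finset.Icc 1 t, Nat.choose (2 * k * n) (k * n) := by
  have hL : ∀ n ∈ Finset.Icc 1 t, Nat.choose (2 * n) n ≠ 0 := by
    intro n hn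
    simp only [Finset.mem_Icc] at hn
    exact (Nat.choose_pos (by omega)).ne'
  have hR : ∀ n ∈ Finset.Icc 1 t, Nat.choose (2 * k * n) (k * n) ≠ 0 := by
    intro n _
    refine (Nat.choose_pos ?_).ne'
    rw [mul_assoc]
    exact Nat.le_mul_of_pos_left _ (by norm_num)
  rw [← Nat.factorization_le_iff_dvd (Finset.prod_ne_zero_iff.mpr hL)
    (Finset.prod_ne_zero_iff.mpr hR)]
  rw [Nat.factorization_prod hL, Nat.factorization_prod hR]
  rw [Finsupp.le_def]
  intro p
  rw [Finset.sum_apply', Finset.sum_apply']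
  by_cases hp : p.Prime
  · set c := 2 * (k * t) + 1 with hcdef
    have hcb : 2 * (k * t) < p ^ c := by
      calc 2 * (k * t) < 2 ^ (2 * (k * t)) := Nat.lt_two_pow_self
        _ ≤ 2 ^ c := Nat.pow_le_pow_right (by norm_num) (by omega)
        _ ≤ p ^ c := Nat.pow_le_pow_left hp.two_le c
    set a := k.factorization p with hadef
    set b := a + c with hbdef
    have hpc_le : p ^ c ≤ p ^ b := Nat.pow_le_pow_right hp.pos (by omega)
    have hL2 : ∑ n ∈ Finset.Icc 1 t, ((2 * n).choose n).factorization p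
        = ∑ i ∈ Finset.Ico 1 b, ProdCB.cnt 1 (p ^ i) t := by
      have h1 : ∀ n ∈ Finset.Icc 1 t, ((2 * n).choose n).factorization p
          = ((Finset.Ico 1 b).filter (fun i => p ^ i ≤ 2 * (n % p ^ i))).card := by
        intro n hn
        simp only [Finset.mem_Icc] at hn
        apply ProdCB.kummer hp (by omega)
        have h5 : n ≤ k * t := le_trans hn.2 (Nat.le_mul_of_pos_left t hk)
        omega
      rw [Finset.sum_congr rfl h1]
      unfold ProdCB.cnt
      simp only [Finset.card_filter, one_mul]
      rw [Finset.sum_comm]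
    have hR2 : ∑ n ∈ Finset.Icc 1 t, ((2 * k * n).choose (k * n)).factorization p
        = ∑ i ∈ Finset.Ico 1 b, ProdCB.cnt k (p ^ i) t := by
      have h1 : ∀ n ∈ Finset.Icc 1 t, ((2 * k * n).choose (k * n)).factorization p
          = ((Finset.Ico 1 b).filter (fun i => p ^ i ≤ 2 * (k * n % p ^ i))).card := by
        intro n hn
        simp only [Finset.mem_Icc] at hn
        rw [mul_assoc]
        apply ProdCB.kummer hp (Nat.mul_pos (by omega) (by omega))
        have h5 : k * n ≤ k * t := Nat.mul_le_mul_left k hn.2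
        omega
      rw [Finset.sum_congr rfl h1]
      unfold ProdCB.cnt
      simp only [Finset.card_filter]
      rw [Finset.sum_comm]
    rw [hL2, hR2]
    exact ProdCB.sum_cnt_le hp (by omega) (by omega) hcb
  · simp only [Nat.factorization_eq_zero_of_not_prime _ hp]
    simp
end

section
/- For all positive integers k and t, the product ∏_{n=1}^t (3n)!/(n!·n!·n!) divides the product ∏_{n=1}^t (3kn)!/((kn)!·(kn)!·(kn)!). -/
open Finset Nat

/-- Sum of a monotone function over a finset of `s` distinct positive naturals is at least
its sum over `{1, ..., s}`. -/
lemma rank_sum (g : ℕ → ℕ) (hg : Monotone g) :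
    ∀ s : ℕ, ∀ A : Finset ℕ, A.card = s → 0 ∉ A →
      ∑ r ∈ Finset.Icc 1 s, g r ≤ ∑ a ∈ A, g a := by
  intro s
  induction s with
  | zero => intro A _ _; simp
  | succ s ih =>
    intro A hA h0
    have hne : A.Nonempty := Finset.card_pos.mp (by omega)
    set m := A.max' hne with hm
    have hmA : m ∈ A := A.max'_mem hne
    have hsub : A ⊆ Finset.Icc 1 m := by
      intro a ha
      refine Finset.mem_Icc.mpr ⟨?_, A.le_max' a ha⟩
      have : a ≠ 0 := fun h => h0 (h ▸ ha)
      omega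
    have hcard : s + 1 ≤ m := by
      have h1 := Finset.card_le_card hsub
      rw [hA, Nat.card_Icc] at h1
      omega
    have key : ∑ r ∈ Icc 1 (s+1), g r = (∑ r ∈ Icc 1 s, g r) + g (s+1) :=
      Finset.sum_Icc_succ_top (by omega) g
    have h2 : g m + ∑ a ∈ A.erase m, g a = ∑ a ∈ A, g a := Finset.add_sum_erase A g hmA
    have h3 := ih (A.erase m) (by rw [Finset.card_erase_of_mem hmA, hA]; rfl)
      (fun h => h0 (Finset.mem_of_mem_erase h))
    have h4 : g (s+1) ≤ g m := hg hcard
    omega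

/-- Sum of `r ↦ 3r/q` over a full period of `n ↦ v n mod q` with `v` coprime to `q`. -/
lemma block_sum (q v c : ℕ) (hq : 0 < q) (hv : Nat.Coprime v q) :
    ∑ j ∈ Finset.range q, 3 * (v * (c + 1 + j) % q) / q = ∑ r ∈ Finset.range q, 3 * r / q := by
  set f : ℕ → ℕ := fun j => v * (c + 1 + j) % q with hf
  have hinj : ∀ j₁ ∈ Finset.range q, ∀ j₂ ∈ Finset.range q, f j₁ = f j₂ → j₁ = j₂ := by
    intro j₁ h₁ j₂ h₂ h
    have h' : (c + 1 + j₁) % q = (c + 1 + j₂) % q :=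
      Nat.ModEq.cancel_left_of_coprime (by rw [Nat.coprime_comm] at hv; exact hv) h
    have := Nat.ModEq.add_left_cancel' (c + 1) h'
    simp only [Finset.mem_range] at h₁ h₂
    rwa [Nat.ModEq, Nat.mod_eq_of_lt h₁, Nat.mod_eq_of_lt h₂] at this
  have hsub : (Finset.range q).image f ⊆ Finset.range q := by
    intro r hr
    rcases Finset.mem_image.mp hr with ⟨j, _, rfl⟩
    exact Finset.mem_range.mpr (Nat.mod_lt _ hq)
  have himg : (Finset.range q).image f = Finset.range q :=
    Finset.eq_of_subset_of_card_le hsub (le_of_eq (by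
      rw [Finset.card_image_of_injOn (fun a ha b hb => hinj a ha b hb), Finset.card_range]))
  conv_rhs => rw [← himg]
  rw [Finset.sum_image hinj]

/-- Key inequality: for `u` coprime to `q`,
`∑_{n=1}^t ⌊3(n mod q)/q⌋ ≤ ∑_{n=1}^t ⌊3(un mod q)/q⌋`. -/
lemma keyA (q u : ℕ) (hq : 0 < q) (hu : Nat.Coprime u q) :
    ∀ t : ℕ, ∑ n ∈ Finset.Icc 1 t, 3 * (n % q) / q ≤ ∑ n ∈ Finset.Icc 1 t, 3 * (u * n % q) / q := by
  intro t
  induction t using Nat.strong_induction_on with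
  | _ t ih =>
    by_cases hlt : t < q
    · -- subset / rank argument
      have hL : ∑ n ∈ Icc 1 t, 3 * (n % q) / q = ∑ n ∈ Icc 1 t, 3 * n / q := by
        refine Finset.sum_congr rfl fun n hn => ?_
        rw [Nat.mod_eq_of_lt (by have := Finset.mem_Icc.mp hn; omega)]
      have hinj : ∀ a ∈ Icc 1 t, ∀ b ∈ Icc 1 t, u * a % q = u * b % q → a = b := by
        intro a ha b hb h
        have h' : a % q = b % q :=
          Nat.ModEq.cancel_left_of_coprime (by rw [Nat.coprime_comm] at hu; exact hu) h
        have ha' := Finset.mem_Icc.mp ha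
        have hb' := Finset.mem_Icc.mp hb
        rwa [Nat.mod_eq_of_lt (by omega), Nat.mod_eq_of_lt (by omega)] at h'
      set A := (Icc 1 t).image (fun n => u * n % q) with hA
      have hcard : A.card = t := by
        rw [hA, Finset.card_image_of_injOn (fun a ha b hb => hinj a ha b hb), Nat.card_Icc]
        omega
      have h0A : 0 ∉ A := by
        intro h0
        rcases Finset.mem_image.mp h0 with ⟨n, hn, hn0⟩
        have hq' : q ∣ u * n := Nat.dvd_of_mod_eq_zero hn0
        have hqn : q ∣ n := Nat.Coprime.dvd_of_dvd_mul_left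
          (by rw [Nat.coprime_comm] at hu; exact hu) hq'
        have h5 := Finset.mem_Icc.mp hn
        have := Nat.le_of_dvd (by omega) hqn
        omega
      have hrank := rank_sum (fun r => 3 * r / q)
        (fun a b hab => Nat.div_le_div_right (by omega)) t A hcard h0A
      have himg := Finset.sum_image (f := fun r => 3 * r / q) hinj
      rw [hL, ← himg]
      exact hrank
    · -- peel off one full period
      push_neg at hlt
      have hts : t - q < t := by omega
      have hsplit : ∀ F : ℕ → ℕ, ∑ n ∈ Icc 1 t, F n
          = (∑ n ∈ Icc 1 (t - q), F n) + ∑ n ∈ Ico (t - q + 1) (t + 1), F n := by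
        intro F
        rw [← Finset.Ico_add_one_right_eq_Icc, ← Finset.Ico_add_one_right_eq_Icc]
        exact (Finset.sum_Ico_consecutive F (by omega) (by omega)).symm
      have hperiod : ∀ v : ℕ, Nat.Coprime v q →
          ∑ n ∈ Ico (t - q + 1) (t + 1), 3 * (v * n % q) / q = ∑ r ∈ Finset.range q, 3 * r / q := by
        intro v hv
        rw [Finset.sum_Ico_eq_sum_range]
        have hqlen : t + 1 - (t - q + 1) = q := by omega
        rw [hqlen]
        have : ∀ j, (t - q + 1) + j = (t - q) + 1 + j := fun j => by omega
        calc ∑ j ∈ Finset.range q, 3 * (v * (t - q + 1 + j) % q) / q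
            = ∑ j ∈ Finset.range q, 3 * (v * ((t - q) + 1 + j) % q) / q := by
              refine Finset.sum_congr rfl fun j _ => by rw [this j]
          _ = ∑ r ∈ Finset.range q, 3 * r / q := block_sum q v (t - q) hq hv
      have hL := hsplit (fun n => 3 * (n % q) / q)
      have hR := hsplit (fun n => 3 * (u * n % q) / q)
      have hpl : ∑ n ∈ Ico (t - q + 1) (t + 1), 3 * (n % q) / q
          = ∑ r ∈ Finset.range q, 3 * r / q := by
        have := hperiod 1 (Nat.coprime_one_left q)
        simpa using this
      have hpr := hperiod u hu
      have hih := ih (t - q) hts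
      omega

lemma multinomial_three_spec (m : ℕ) :
    m ! * m ! * m ! * Nat.multinomial Finset.univ ![m, m, m] = (3 * m)! := by
  have h := Nat.multinomial_spec Finset.univ ![m, m, m]
  simpa [Fin.sum_univ_three, Fin.prod_univ_three, show m + m + m = 3 * m by ring] using h

lemma vC_rel (p m : ℕ) [hp : Fact p.Prime] :
    padicValNat p (Nat.multinomial Finset.univ ![m, m, m]) + 3 * padicValNat p (m !)
      = padicValNat p ((3 * m)!) := by
  have h := multinomial_three_spec m
  have hm : m ! ≠ 0 := Nat.factorial_ne_zero m
  have hC : Nat.multinomial Finset.univ ![m, m, m] ≠ 0 := (Nat.multinomial_pos _ _).ne'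
  calc padicValNat p (Nat.multinomial Finset.univ ![m, m, m]) + 3 * padicValNat p (m !)
      = padicValNat p (m ! * m ! * m ! * Nat.multinomial Finset.univ ![m, m, m]) := by
        rw [padicValNat.mul (mul_ne_zero (mul_ne_zero hm hm) hm) hC,
          padicValNat.mul (mul_ne_zero hm hm) hm, padicValNat.mul hm hm]
        ring
    _ = padicValNat p ((3 * m)!) := by rw [h]

lemma vC_pmul (p m : ℕ) [hp : Fact p.Prime] :
    padicValNat p (Nat.multinomial Finset.univ ![p * m, p * m, p * m])
      = padicValNat p (Nat.multinomial Finset.univ ![m, m, m]) := by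
  have h1 := vC_rel p (p * m)
  have h2 := vC_rel p m
  have h3 : padicValNat p ((p * m)!) = padicValNat p (m !) + m := padicValNat_factorial_mul m
  have h4 : padicValNat p ((3 * (p * m))!) = padicValNat p ((3 * m)!) + 3 * m := by
    rw [show 3 * (p * m) = p * (3 * m) by ring]
    exact padicValNat_factorial_mul (3 * m)
  omega

lemma vC_pow (p : ℕ) [hp : Fact p.Prime] (j m : ℕ) :
    padicValNat p (Nat.multinomial Finset.univ ![p ^ j * m, p ^ j * m, p ^ j * m])
      = padicValNat p (Nat.multinomial Finset.univ ![m, m, m]) := by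
  induction j with
  | zero => simp
  | succ j ih =>
    rw [show p ^ (j + 1) * m = p * (p ^ j * m) by ring, vC_pmul, ih]

lemma vC_eq (p m b : ℕ) [hpf : Fact p.Prime] (hb : Nat.log p (3 * m) < b) :
    padicValNat p (Nat.multinomial Finset.univ ![m, m, m])
      = ∑ i ∈ Finset.Ico 1 b, 3 * (m % p ^ i) / p ^ i := by
  have hp : p.Prime := hpf.out
  have h2 := vC_rel p m
  rw [padicValNat_factorial hb,
    padicValNat_factorial (lt_of_le_of_lt (Nat.log_mono_right (by omega)) hb)] at h2
  have hterm : ∀ i ∈ Finset.Ico 1 b, 3 * m / p ^ i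
      = 3 * (m / p ^ i) + 3 * (m % p ^ i) / p ^ i := by
    intro i _
    have hq : 0 < p ^ i := pow_pos hp.pos i
    conv_lhs => rw [show 3 * m = 3 * (m % p ^ i) + (3 * (m / p ^ i)) * p ^ i by
      conv_lhs => rw [← Nat.div_add_mod m (p ^ i)]
      ring]
    rw [Nat.add_mul_div_right _ _ hq, Nat.add_comm]
  rw [Finset.sum_congr rfl hterm, Finset.sum_add_distrib, ← Finset.mul_sum] at h2
  omega



/-- For all positive integers `k` and `t`, `∏_{n=1}^t (3n)!/(n!·n!·n!)` divides
`∏_{n=1}^t (3kn)!/((kn)!·(kn)!·(kn)!)`. -/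
theorem prod_multinomial_three_equal_div (k t : ℕ) (hk : 1 ≤ k) (ht : 1 ≤ t) :
    (∏ n ∈ Finset.Icc 1 t, Nat.multinomial Finset.univ ![n, n, n]) ∣
      ∏ n ∈ Finset.Icc 1 t, Nat.multinomial Finset.univ ![k * n, k * n, k * n] := by
  have hC0 : ∀ m : ℕ, Nat.multinomial Finset.univ ![m, m, m] ≠ 0 :=
    fun m => (Nat.multinomial_pos _ _).ne'
  rw [← Nat.factorization_le_iff_dvd (Finset.prod_ne_zero_iff.mpr fun n _ => hC0 n)
      (Finset.prod_ne_zero_iff.mpr fun n _ => hC0 _),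
      Nat.factorization_prod (fun n _ => hC0 n), Nat.factorization_prod (fun n _ => hC0 _),
      Finsupp.le_def]
  intro p
  rw [Finset.sum_apply', Finset.sum_apply']
  by_cases hp : p.Prime
  · haveI := Fact.mk hp
    simp only [Nat.factorization_def _ hp]
    have hk0 : k ≠ 0 := by omega
    set j := k.factorization p with hj
    set u := k / p ^ j with hu'
    have hku : p ^ j * u = k := Nat.ordProj_mul_ordCompl_eq_self k p
    have hpu : ¬ p ∣ u := Nat.not_dvd_ordCompl hp hk0
    have hu0 : 0 < u := Nat.ordCompl_pos p hk0
    have hcop : ∀ i : ℕ, Nat.Coprime u (p ^ i) :=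
      fun i => Nat.Coprime.pow_right i (((Nat.Prime.coprime_iff_not_dvd hp).mpr hpu).symm)
    have hstep : ∀ n : ℕ,
        padicValNat p (Nat.multinomial Finset.univ ![k * n, k * n, k * n])
          = padicValNat p (Nat.multinomial Finset.univ ![u * n, u * n, u * n]) := by
      intro n
      rw [show k * n = p ^ j * (u * n) by rw [← hku]; ring]
      exact vC_pow p j (u * n)
    set b := Nat.log p (3 * (u * t)) + 1 with hb
    have hbn : ∀ n ∈ Finset.Icc 1 t, Nat.log p (3 * n) < b := by
      intro n hn
      have h1 := Finset.mem_Icc.mp hn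
      have h2 : 3 * n ≤ 3 * (u * t) := by nlinarith
      exact lt_of_le_of_lt (Nat.log_mono_right h2) (by omega)
    have hbu : ∀ n ∈ Finset.Icc 1 t, Nat.log p (3 * (u * n)) < b := by
      intro n hn
      have h1 := Finset.mem_Icc.mp hn
      have h2 : 3 * (u * n) ≤ 3 * (u * t) := by nlinarith
      exact lt_of_le_of_lt (Nat.log_mono_right h2) (by omega)
    calc ∑ n ∈ Finset.Icc 1 t, padicValNat p (Nat.multinomial Finset.univ ![n, n, n])
        = ∑ n ∈ Finset.Icc 1 t, ∑ i ∈ Finset.Ico 1 b, 3 * (n % p ^ i) / p ^ i :=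
          Finset.sum_congr rfl fun n hn => vC_eq p n b (hbn n hn)
      _ = ∑ i ∈ Finset.Ico 1 b, ∑ n ∈ Finset.Icc 1 t, 3 * (n % p ^ i) / p ^ i :=
          Finset.sum_comm
      _ ≤ ∑ i ∈ Finset.Ico 1 b, ∑ n ∈ Finset.Icc 1 t, 3 * (u * n % p ^ i) / p ^ i :=
          Finset.sum_le_sum fun i _ => keyA (p ^ i) u (pow_pos hp.pos i) (hcop i) t
      _ = ∑ n ∈ Finset.Icc 1 t, ∑ i ∈ Finset.Ico 1 b, 3 * (u * n % p ^ i) / p ^ i :=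
          Finset.sum_comm
      _ = ∑ n ∈ Finset.Icc 1 t,
            padicValNat p (Nat.multinomial Finset.univ ![u * n, u * n, u * n]) :=
          Finset.sum_congr rfl fun n hn => (vC_eq p (u * n) b (hbu n hn)).symm
      _ = ∑ n ∈ Finset.Icc 1 t,
            padicValNat p (Nat.multinomial Finset.univ ![k * n, k * n, k * n]) :=
          Finset.sum_congr rfl fun n _ => (hstep n).symm
  · simp [Nat.factorization_eq_zero_of_not_prime _ hp]
end

section
/- For all positive integers k and t, the product ∏_{n=1}^t (6n)!/(n!·(2n)!·(3n)!) divides the product ∏_{n=1}^t (6kn)!/((kn)!·(2kn)!·(3kn)!). -/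
open Finset Nat

/-- `g a = a - a/2 - a/3 - a/6`; the "carry" function. -/
def gg (a : ℕ) : ℕ := a - a/2 - a/3 - a/6

lemma gg_add_six_mul (c z : ℕ) : gg (6*c + z) = gg z := by unfold gg; omega

lemma gg_mono {x y : ℕ} (hxy : x ≤ y) (hy : y < 6) : gg x ≤ gg y := by unfold gg; omega

lemma gg_split (a : ℕ) : a/6 + a/3 + a/2 + gg a = a := by unfold gg; omega

lemma div_six (q n : ℕ) (hq : 0 < q) : n / q = (6*n/q)/6 := by
  rw [Nat.div_div_eq_div_mul, mul_comm q 6, Nat.mul_div_mul_left _ _ (by norm_num)]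

lemma div_three (q n : ℕ) (hq : 0 < q) : 2*n / q = (6*n/q)/3 := by
  rw [Nat.div_div_eq_div_mul, mul_comm q 3, show 6*n = 3*(2*n) by ring,
    Nat.mul_div_mul_left _ _ (by norm_num)]

lemma div_two (q n : ℕ) (hq : 0 < q) : 3*n / q = (6*n/q)/2 := by
  rw [Nat.div_div_eq_div_mul, mul_comm q 2, show 6*n = 2*(3*n) by ring,
    Nat.mul_div_mul_left _ _ (by norm_num)]

lemma gg_mod (q x : ℕ) (hq : 0 < q) : gg (6*x/q) = gg (6*(x % q)/q) := by
  conv_lhs => rw [show x = q*(x/q) + x % q from (Nat.div_add_mod x q).symm]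
  rw [show 6*(q*(x/q) + x % q) = q*(6*(x/q)) + 6*(x % q) by ring,
    Nat.mul_add_div hq, gg_add_six_mul]

/-- Sum of a monotone function over the `t` smallest positive values is minimal. -/
lemma smallest_sum (q : ℕ) (h : ℕ → ℕ) (mono : ∀ a b, a ≤ b → b < q → h a ≤ h b) :
    ∀ (t : ℕ) (S : Finset ℕ), S.card = t → S ⊆ Finset.Icc 1 (q-1) →
      ∑ n ∈ Finset.Icc 1 t, h n ≤ ∑ s ∈ S, h s := by
  intro t
  induction t with
  | zero => simp
  | succ t ih =>
    intro S hcard hsub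
    have hne : S.Nonempty := Finset.card_pos.mp (by omega)
    set m := S.max' hne with hm
    have hmS : m ∈ S := S.max'_mem hne
    have hup : m ≤ q - 1 := (Finset.mem_Icc.mp (hsub hmS)).2
    have h1m : 1 ≤ m := (Finset.mem_Icc.mp (hsub hmS)).1
    have hSm : S ⊆ Finset.Icc 1 m := fun s hs =>
      Finset.mem_Icc.mpr ⟨(Finset.mem_Icc.mp (hsub hs)).1, S.le_max' s hs⟩
    have hcm : t + 1 ≤ m := by
      have := Finset.card_le_card hSm
      rw [hcard, Nat.card_Icc] at this; omega
    calc ∑ n ∈ Finset.Icc 1 (t+1), h n = (∑ n ∈ Finset.Icc 1 t, h n) + h (t+1) :=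
          Finset.sum_Icc_succ_top (by omega) h
      _ ≤ (∑ s ∈ S.erase m, h s) + h m := by
          refine Nat.add_le_add (ih _ (by rw [Finset.card_erase_of_mem hmS, hcard]; rfl) ?_)
            (mono _ _ hcm (by omega))
          exact (Finset.erase_subset _ _).trans hsub
      _ = ∑ s ∈ S, h s := Finset.sum_erase_add _ _ hmS

lemma injOn_mul_mod {q k : ℕ} (hco : Nat.Coprime k q) {s : Finset ℕ} {a : ℕ}
    (hwin : ∀ n ∈ s, a < n ∧ n ≤ a + q) :
    Set.InjOn (fun n => (k*n) % q) s := by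
  intro n hn n' hn' hmod
  have hmod' : n ≡ n' [MOD q] :=
    Nat.ModEq.cancel_left_of_coprime (Nat.coprime_comm.mp hco) (hmod : k*n ≡ k*n' [MOD q])
  obtain ⟨h1, h2⟩ := hwin n hn
  obtain ⟨h1', h2'⟩ := hwin n' hn'
  rcases le_total n n' with hle | hle
  · have hd := (Nat.modEq_iff_dvd' hle).mp hmod'
    have := Nat.eq_zero_of_dvd_of_lt hd (show n' - n < q by omega)
    omega
  · have hd := (Nat.modEq_iff_dvd' hle).mp hmod'.symm
    rcases Nat.eq_zero_of_dvd_of_lt hd (show n - n' < q by omega) with h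
    omega

lemma full_period (q k : ℕ) (hq : 0 < q) (hco : Nat.Coprime k q) (a : ℕ) :
    ∑ n ∈ Finset.Ioc a (a+q), gg (6*(k*n)/q) = ∑ r ∈ Finset.range q, gg (6*r/q) := by
  have hinj : Set.InjOn (fun n => (k*n) % q) (Finset.Ioc a (a+q)) :=
    injOn_mul_mod hco (fun n hn => by simpa using Finset.mem_Ioc.mp hn)
  have himg : (Finset.Ioc a (a+q)).image (fun n => (k*n) % q) = Finset.range q := by
    apply Finset.eq_of_subset_of_card_le
    · intro r hr
      obtain ⟨n, _, rfl⟩ := Finset.mem_image.mp hr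
      exact Finset.mem_range.mpr (Nat.mod_lt _ hq)
    · rw [Finset.card_image_of_injOn hinj, Nat.card_Ioc, Finset.card_range]; omega
  calc ∑ n ∈ Finset.Ioc a (a+q), gg (6*(k*n)/q)
      = ∑ n ∈ Finset.Ioc a (a+q), gg (6*((k*n) % q)/q) := by
        exact Finset.sum_congr rfl fun n _ => gg_mod q (k*n) hq
    _ = ∑ r ∈ (Finset.Ioc a (a+q)).image (fun n => (k*n) % q), gg (6*r/q) :=
        (Finset.sum_image (f := fun r => gg (6*r/q)) (fun x hx y hy => hinj hx hy)).symm
    _ = ∑ r ∈ Finset.range q, gg (6*r/q) := by rw [himg]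


lemma sum_g_le (q k : ℕ) (hq : 0 < q) (hco : Nat.Coprime k q) (t : ℕ) :
    ∑ n ∈ Finset.Icc 1 t, gg (6*n/q) ≤ ∑ n ∈ Finset.Icc 1 t, gg (6*(k*n)/q) := by
  induction t using Nat.strong_induction_on with
  | _ t ih =>
    rcases lt_or_ge t q with hlt | hge
    · -- t < q : rearrangement with the t smallest residues
      set S : Finset ℕ := (Finset.Icc 1 t).image (fun n => (k*n) % q) with hS
      have hinj : Set.InjOn (fun n => (k*n) % q) (Finset.Icc 1 t) :=
        injOn_mul_mod (a := 0) hco (fun n hn => by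
          have := Finset.mem_Icc.mp hn; exact ⟨by omega, by omega⟩)
      have hmono : ∀ a b, a ≤ b → b < q → gg (6*a/q) ≤ gg (6*b/q) := by
        intro a b hab hb
        refine gg_mono (Nat.div_le_div_right (by omega)) ?_
        exact Nat.div_lt_of_lt_mul (by omega)
      have hsub : S ⊆ Finset.Icc 1 (q-1) := by
        intro r hr
        obtain ⟨n, hn, rfl⟩ := Finset.mem_image.mp hr
        have hn' := Finset.mem_Icc.mp hn
        have hne : (k*n) % q ≠ 0 := by
          intro h0
          have hdvd : q ∣ k * n := Nat.dvd_of_mod_eq_zero h0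
          have : q ∣ n := Nat.Coprime.dvd_of_dvd_mul_left
            (Nat.coprime_comm.mp hco) hdvd
          have := Nat.le_of_dvd (by omega) this
          omega
        have : (k*n) % q < q := Nat.mod_lt _ hq
        exact Finset.mem_Icc.mpr ⟨by omega, by omega⟩
      have hcard : S.card = t := by
        rw [hS, Finset.card_image_of_injOn hinj, Nat.card_Icc]; omega
      calc ∑ n ∈ Finset.Icc 1 t, gg (6*n/q)
          ≤ ∑ s ∈ S, gg (6*s/q) :=
            smallest_sum q (fun r => gg (6*r/q)) hmono t S hcard hsub
        _ = ∑ n ∈ Finset.Icc 1 t, gg (6*((k*n) % q)/q) :=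
            Finset.sum_image (f := fun r => gg (6*r/q)) (fun x hx y hy => hinj hx hy)
        _ = ∑ n ∈ Finset.Icc 1 t, gg (6*(k*n)/q) :=
            Finset.sum_congr rfl fun n _ => (gg_mod q (k*n) hq).symm
    · -- t ≥ q : peel off a full period
      have hsplit : ∀ (k' : ℕ), Nat.Coprime k' q →
          ∑ n ∈ Finset.Icc 1 t, gg (6*(k'*n)/q)
            = (∑ n ∈ Finset.Icc 1 (t-q), gg (6*(k'*n)/q)) + ∑ r ∈ Finset.range q, gg (6*r/q) := by
        intro k' hco'
        have h1 : Finset.Icc 1 t = Finset.Ioc 0 t := rfl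
        have h2 : Finset.Icc 1 (t-q) = Finset.Ioc 0 (t-q) := rfl
        rw [h1, h2, ← Finset.sum_Ioc_consecutive _ (Nat.zero_le (t-q)) (by omega : t - q ≤ t),
          show t = (t-q) + q by omega, Nat.add_sub_cancel,
          full_period q k' hq hco' (t-q)]
      have hs1 := hsplit 1 (Nat.coprime_one_left q)
      simp only [one_mul] at hs1
      rw [hsplit k hco, hs1]
      have := ih (t - q) (by omega)
      exact Nat.add_le_add_right this _


lemma V_spec (p : ℕ) [Fact p.Prime] (n : ℕ) :
    padicValNat p (n !) + padicValNat p ((2*n)!) + padicValNat p ((3*n)!)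
      + padicValNat p (Nat.multinomial Finset.univ ![n, 2*n, 3*n])
      = padicValNat p ((6*n)!) := by
  have hs := Nat.multinomial_spec (Finset.univ : Finset (Fin 3)) ![n, 2*n, 3*n]
  simp only [Fin.prod_univ_three, Fin.sum_univ_three, Matrix.cons_val_zero, Matrix.cons_val_one,
    Matrix.head_cons, Matrix.cons_val_two, Matrix.tail_cons] at hs
  rw [show n + 2*n + 3*n = 6*n by ring] at hs
  rw [← hs, padicValNat.mul (Nat.mul_ne_zero (Nat.mul_ne_zero (Nat.factorial_ne_zero _)
        (Nat.factorial_ne_zero _)) (Nat.factorial_ne_zero _)) (Nat.multinomial_pos _ _).ne',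
      padicValNat.mul (Nat.mul_ne_zero (Nat.factorial_ne_zero _) (Nat.factorial_ne_zero _))
        (Nat.factorial_ne_zero _),
      padicValNat.mul (Nat.factorial_ne_zero _) (Nat.factorial_ne_zero _)]

lemma Vv_mul_p (p : ℕ) [Fact p.Prime] (m : ℕ) :
    padicValNat p (Nat.multinomial Finset.univ ![p*m, 2*(p*m), 3*(p*m)])
      = padicValNat p (Nat.multinomial Finset.univ ![m, 2*m, 3*m]) := by
  have h1 := V_spec p m
  have h2 := V_spec p (p*m)
  have e1 : padicValNat p ((p*m)!) = padicValNat p (m !) + m := padicValNat_factorial_mul _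
  have e2 : padicValNat p ((2*(p*m))!) = padicValNat p ((2*m)!) + 2*m := by
    rw [show 2*(p*m) = p*(2*m) by ring]; exact padicValNat_factorial_mul _
  have e3 : padicValNat p ((3*(p*m))!) = padicValNat p ((3*m)!) + 3*m := by
    rw [show 3*(p*m) = p*(3*m) by ring]; exact padicValNat_factorial_mul _
  have e6 : padicValNat p ((6*(p*m))!) = padicValNat p ((6*m)!) + 6*m := by
    rw [show 6*(p*m) = p*(6*m) by ring]; exact padicValNat_factorial_mul _
  omega

lemma Vv_pow_mul (p : ℕ) [Fact p.Prime] (j m : ℕ) :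
    padicValNat p (Nat.multinomial Finset.univ ![p^j*m, 2*(p^j*m), 3*(p^j*m)])
      = padicValNat p (Nat.multinomial Finset.univ ![m, 2*m, 3*m]) := by
  induction j with
  | zero => norm_num
  | succ j ih => rw [show p^(j+1)*m = p*(p^j*m) by ring, Vv_mul_p, ih]

lemma V_eq (p : ℕ) [hp : Fact p.Prime] (n B : ℕ) (hn : 0 < n) (hB : 6*n < p^B) :
    padicValNat p (Nat.multinomial Finset.univ ![n, 2*n, 3*n])
      = ∑ i ∈ Finset.Ico 1 B, gg (6*n/p^i) := by
  have hlog : ∀ m : ℕ, 0 < m → m ≤ 6*n → Nat.log p m < B := fun m hm hle =>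
    Nat.log_lt_of_lt_pow (by omega) (by omega)
  have h1 := padicValNat_factorial (p := p) (n := n) (b := B) (hlog n hn (by omega))
  have h2 := padicValNat_factorial (p := p) (n := 2*n) (b := B) (hlog (2*n) (by omega) (by omega))
  have h3 := padicValNat_factorial (p := p) (n := 3*n) (b := B) (hlog (3*n) (by omega) (by omega))
  have h6 := padicValNat_factorial (p := p) (n := 6*n) (b := B) (hlog (6*n) (by omega) (by omega))
  have hspec := V_spec p n
  rw [h1, h2, h3, h6] at hspec
  have hterm : ∀ i ∈ Finset.Ico 1 B, n/p^i + 2*n/p^i + 3*n/p^i + gg (6*n/p^i) = 6*n/p^i := by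
    intro i _
    have hq : 0 < p^i := pow_pos hp.out.pos i
    rw [div_six _ _ hq, div_three _ _ hq, div_two _ _ hq]
    exact gg_split _
  have hsum : (∑ i ∈ Finset.Ico 1 B, n/p^i) + (∑ i ∈ Finset.Ico 1 B, 2*n/p^i)
      + (∑ i ∈ Finset.Ico 1 B, 3*n/p^i) + (∑ i ∈ Finset.Ico 1 B, gg (6*n/p^i))
      = ∑ i ∈ Finset.Ico 1 B, 6*n/p^i := by
    rw [← Finset.sum_add_distrib, ← Finset.sum_add_distrib, ← Finset.sum_add_distrib]
    exact Finset.sum_congr rfl hterm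
  omega

lemma main_p (p : ℕ) (hp : p.Prime) (k t : ℕ) (hk : 0 < k) :
    ∑ n ∈ Finset.Icc 1 t, padicValNat p (Nat.multinomial Finset.univ ![n, 2*n, 3*n])
      ≤ ∑ n ∈ Finset.Icc 1 t, padicValNat p (Nat.multinomial Finset.univ ![k*n, 2*(k*n), 3*(k*n)]) := by
  haveI : Fact p.Prime := ⟨hp⟩
  set k' := k / p ^ (k.factorization p) with hk'def
  have hk' : 0 < k' := Nat.ordCompl_pos p hk.ne'
  have hkk : p^(k.factorization p) * k' = k := Nat.ordProj_mul_ordCompl_eq_self k p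
  have hco : Nat.Coprime k' p := (Nat.coprime_ordCompl hp hk.ne').symm
  have hstep : ∀ n : ℕ, padicValNat p (Nat.multinomial Finset.univ ![k*n, 2*(k*n), 3*(k*n)])
      = padicValNat p (Nat.multinomial Finset.univ ![k'*n, 2*(k'*n), 3*(k'*n)]) := by
    intro n
    have hx : k*n = p^(k.factorization p)*(k'*n) := by rw [← mul_assoc, hkk]
    rw [hx, Vv_pow_mul]
  set B := 6*k'*t with hBdef
  have hpB : 6*k'*t < p^B := lt_of_lt_of_le Nat.lt_two_pow_self (Nat.pow_le_pow_left hp.two_le B)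
  have hV : ∀ n ∈ Finset.Icc 1 t, padicValNat p (Nat.multinomial Finset.univ ![n, 2*n, 3*n])
      = ∑ i ∈ Finset.Ico 1 B, gg (6*n/p^i) := by
    intro n hn
    have hn' := Finset.mem_Icc.mp hn
    exact V_eq p n B (by omega) (by nlinarith [hpB])
  have hVk : ∀ n ∈ Finset.Icc 1 t, padicValNat p (Nat.multinomial Finset.univ ![k'*n, 2*(k'*n), 3*(k'*n)])
      = ∑ i ∈ Finset.Ico 1 B, gg (6*(k'*n)/p^i) := by
    intro n hn
    have hn' := Finset.mem_Icc.mp hn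
    exact V_eq p (k'*n) B (Nat.mul_pos hk' (by omega)) (by nlinarith [hpB])
  calc ∑ n ∈ Finset.Icc 1 t, padicValNat p (Nat.multinomial Finset.univ ![n, 2*n, 3*n])
      = ∑ n ∈ Finset.Icc 1 t, ∑ i ∈ Finset.Ico 1 B, gg (6*n/p^i) := Finset.sum_congr rfl hV
    _ = ∑ i ∈ Finset.Ico 1 B, ∑ n ∈ Finset.Icc 1 t, gg (6*n/p^i) := Finset.sum_comm
    _ ≤ ∑ i ∈ Finset.Ico 1 B, ∑ n ∈ Finset.Icc 1 t, gg (6*(k'*n)/p^i) := by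
        refine Finset.sum_le_sum fun i _ => ?_
        exact sum_g_le (p^i) k' (pow_pos hp.pos i) (hco.pow_right i) t
    _ = ∑ n ∈ Finset.Icc 1 t, ∑ i ∈ Finset.Ico 1 B, gg (6*(k'*n)/p^i) := Finset.sum_comm
    _ = ∑ n ∈ Finset.Icc 1 t, padicValNat p (Nat.multinomial Finset.univ ![k'*n, 2*(k'*n), 3*(k'*n)]) :=
        (Finset.sum_congr rfl hVk).symm
    _ = ∑ n ∈ Finset.Icc 1 t, padicValNat p (Nat.multinomial Finset.univ ![k*n, 2*(k*n), 3*(k*n)]) :=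
        (Finset.sum_congr rfl fun n _ => (hstep n).symm)


/-- For all positive integers `k` and `t`, `∏_{n=1}^t (6n)!/(n!·(2n)!·(3n)!)` divides
`∏_{n=1}^t (6kn)!/((kn)!·(2kn)!·(3kn)!)`. -/
theorem prod_multinomial_one_two_three_div (k t : ℕ) (hk : 1 ≤ k) (ht : 1 ≤ t) :
    (∏ n ∈ Finset.Icc 1 t, Nat.multinomial Finset.univ ![n, 2 * n, 3 * n]) ∣
      ∏ n ∈ Finset.Icc 1 t, Nat.multinomial Finset.univ ![k * n, 2 * k * n, 3 * k * n] := by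
  have hL : (∏ n ∈ Finset.Icc 1 t, Nat.multinomial Finset.univ ![n, 2 * n, 3 * n]) ≠ 0 :=
    (Finset.prod_pos fun n _ => Nat.multinomial_pos _ _).ne'
  have hR : (∏ n ∈ Finset.Icc 1 t, Nat.multinomial Finset.univ ![k * n, 2 * k * n, 3 * k * n]) ≠ 0 :=
    (Finset.prod_pos fun n _ => Nat.multinomial_pos _ _).ne'
  rw [← Nat.factorization_le_iff_dvd hL hR, Finsupp.le_def]
  intro p
  by_cases hp : p.Prime
  · rw [Nat.factorization_prod (fun n _ => (Nat.multinomial_pos _ _).ne'),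
      Nat.factorization_prod (fun n _ => (Nat.multinomial_pos _ _).ne'),
      Finset.sum_apply', Finset.sum_apply']
    simp only [Nat.factorization_def _ hp]
    have hconv : ∀ n : ℕ, Nat.multinomial Finset.univ ![k * n, 2 * k * n, 3 * k * n]
        = Nat.multinomial Finset.univ ![k * n, 2 * (k * n), 3 * (k * n)] := by
      intro n; rw [mul_assoc, mul_assoc]
    simp only [hconv]
    exact main_p p hp k t (by omega)
  · simp [Nat.factorization_eq_zero_of_not_prime _ hp]
end

section
/- Let s be a positive integer and let b_1, b_2, ..., b_{s+1} be positive integers with gcd(b_1, ..., b_{s+1}) = 1, and set b = b_1 + b_2 + ... + b_{s+1}. Then ∏_{i=1}^{s+1} ( gcd(b − b_i, b_i) · gcd_{j ≠ i, 1 ≤ j ≤ s+1}(b_j) ) ≤ ∏_{i=1}^{s+1} (b − b_i)/s. -/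
open Finset

/-- Discrete AM-GM: `card^card * ∏ f ≤ (∑ f)^card` for natural-valued `f`. -/
private lemma amgm_nat {ι : Type*} (t : Finset ι) (f : ι → ℕ) :
    t.card ^ t.card * ∏ i ∈ t, f i ≤ (∑ i ∈ t, f i) ^ t.card := by
  rcases t.eq_empty_or_nonempty with rfl | ht
  · simp
  have hm : 0 < (t.card : ℝ) := by exact_mod_cast ht.card_pos
  have key := Real.geom_mean_le_arith_mean t (fun _ => (1 : ℝ)) (fun i => (f i : ℝ))
    (fun i _ => zero_le_one) (by simpa using hm) (fun i _ => by positivity)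
  simp only [Real.rpow_one, one_mul, Finset.sum_const, nsmul_eq_mul, mul_one] at key
  have hP0 : (0 : ℝ) ≤ ∏ i ∈ t, (f i : ℝ) := by positivity
  have h2 : (∏ i ∈ t, (f i : ℝ)) ≤ ((∑ i ∈ t, (f i : ℝ)) / t.card) ^ (t.card : ℕ) := by
    have h := pow_le_pow_left₀ (by positivity) key t.card
    rwa [← Real.rpow_natCast ((∏ i ∈ t, (f i : ℝ)) ^ ((t.card : ℝ))⁻¹),
      ← Real.rpow_mul hP0, inv_mul_cancel₀ (ne_of_gt hm), Real.rpow_one] at h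
  rw [div_pow] at h2
  have h3 : (t.card : ℝ) ^ t.card * ∏ i ∈ t, (f i : ℝ) ≤ (∑ i ∈ t, (f i : ℝ)) ^ t.card := by
    rw [mul_comm]
    exact (le_div_iff₀ (by positivity)).mp h2
  exact_mod_cast h3

/-- **GCD inequality.** For positive integers `b₁,…,b_{s+1}` with `gcd(b₁,…,b_{s+1}) = 1`
and `b = b₁ + ⋯ + b_{s+1}`, we have
`∏ᵢ (gcd(b − bᵢ, bᵢ) · gcd_{j ≠ i} b_j) ≤ ∏ᵢ (b − bᵢ)/s`. -/
theorem gcd_product_inequality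
    (s : ℕ) (hs : 0 < s) (b : Fin (s + 1) → ℕ) (hb : ∀ i, 0 < b i)
    (hgcd : Finset.univ.gcd b = 1) :
    (∏ i : Fin (s + 1),
        ((Nat.gcd ((∑ j, b j) - b i) (b i) * (Finset.univ.erase i).gcd b : ℕ) : ℚ)) ≤
      ∏ i : Fin (s + 1), (((∑ j, b j) - b i : ℕ) : ℚ) / (s : ℚ) := by
  set B := ∑ j, b j with hB
  set g : Fin (s + 1) → ℕ := fun i => Nat.gcd (B - b i) (b i) with hgdef
  set G : Fin (s + 1) → ℕ := fun i => (Finset.univ.erase i).gcd b with hGdef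
  have hble : ∀ i, b i ≤ B := fun i =>
    Finset.single_le_sum (fun j _ => Nat.zero_le _) (mem_univ i)
  have hsub : ∀ i, B - b i = ∑ j ∈ univ.erase i, b j := by
    intro i
    have h := Finset.sum_erase_add univ b (mem_univ i)
    omega
  have hGdvd : ∀ i j, j ≠ i → G i ∣ b j := fun i j hj =>
    Finset.gcd_dvd (by simp [hj])
  have hGsum : ∀ i, G i ∣ B - b i := by
    intro i
    rw [hsub i]
    exact Finset.dvd_sum fun j hj => hGdvd i j (Finset.ne_of_mem_erase hj)
  have hGB : ∀ i, Nat.Coprime (G i) B := by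
    intro i
    have h1 : Nat.gcd (G i) B ∣ Finset.univ.gcd b := by
      apply Finset.dvd_gcd
      intro j _
      by_cases hji : j = i
      · subst hji
        have hd1 : Nat.gcd (G j) B ∣ B - (B - b j) :=
          Nat.dvd_sub (Nat.gcd_dvd_right _ _) ((Nat.gcd_dvd_left _ _).trans (hGsum j))
        rwa [Nat.sub_sub_self (hble j)] at hd1
      · exact (Nat.gcd_dvd_left _ _).trans (hGdvd i j hji)
    rw [hgcd] at h1
    exact Nat.dvd_one.mp h1
  have hgdvdB : ∀ i, g i ∣ B := by
    intro i
    have he : (B - b i) + b i = B := by have := hble i; omega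
    exact he ▸ Nat.dvd_add (Nat.gcd_dvd_left _ _) (Nat.gcd_dvd_right _ _)
  have hne : ∀ i : Fin (s + 1), i + 1 ≠ i := by
    intro i h
    have hv := congrArg Fin.val h
    rw [Fin.val_add_one] at hv
    split_ifs at hv with hlast
    · subst hlast; simp [Fin.val_last] at hv; omega
    · omega
  have key : ∀ i, g i * G (i + 1) ∣ b i := by
    intro i
    have hcop : Nat.Coprime (g i) (G (i + 1)) :=
      Nat.Coprime.coprime_dvd_left (hgdvdB i) (hGB (i + 1)).symm
    exact hcop.mul_dvd_of_dvd_of_dvd (Nat.gcd_dvd_right _ _)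
      (hGdvd (i + 1) i (Ne.symm (hne i)))
  have step1 : ∏ i, (g i * G i) ≤ ∏ i, b i := by
    have hshift : ∏ i, G (i + 1) = ∏ i, G i :=
      Fintype.prod_equiv (Equiv.addRight 1) _ _ fun i => rfl
    calc ∏ i, (g i * G i) = (∏ i, g i) * ∏ i, G i := Finset.prod_mul_distrib
      _ = (∏ i, g i) * ∏ i, G (i + 1) := by rw [hshift]
      _ = ∏ i, (g i * G (i + 1)) := Finset.prod_mul_distrib.symm
      _ ≤ ∏ i, b i := Finset.prod_le_prod (fun i _ => Nat.zero_le _)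
            (fun i _ => Nat.le_of_dvd (hb i) (key i))
  have Qpos : 0 < ∏ i, b i := Finset.prod_pos fun i _ => hb i
  have herase : (∏ i : Fin (s + 1), ∏ j ∈ univ.erase i, b j) = (∏ i, b i) ^ s := by
    have h2 : (∏ i : Fin (s + 1), ∏ j ∈ univ.erase i, b j) * ∏ i, b i
        = (∏ i, b i) ^ (s + 1) := by
      rw [← Finset.prod_mul_distrib]
      rw [Finset.prod_congr rfl fun i _ => Finset.prod_erase_mul univ b (mem_univ i)]
      rw [Finset.prod_const, Finset.card_univ, Fintype.card_fin]
    rw [pow_succ] at h2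
    exact Nat.eq_of_mul_eq_mul_right Qpos h2
  have step2 : s ^ (s + 1) * ∏ i, b i ≤ ∏ i, (B - b i) := by
    have hpow : ∀ i : Fin (s + 1), s ^ s * ∏ j ∈ univ.erase i, b j ≤ (B - b i) ^ s := by
      intro i
      have hcard : (univ.erase i).card = s := by
        rw [Finset.card_erase_of_mem (mem_univ i), Finset.card_univ, Fintype.card_fin]
        omega
      have h := amgm_nat (univ.erase i) b
      rwa [hcard, ← hsub i] at h
    have hprod : (∏ i : Fin (s + 1), (s ^ s * ∏ j ∈ univ.erase i, b j))
        ≤ ∏ i, (B - b i) ^ s :=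
      Finset.prod_le_prod (fun _ _ => Nat.zero_le _) fun i _ => hpow i
    have hl : (∏ i : Fin (s + 1), (s ^ s * ∏ j ∈ univ.erase i, b j))
        = (s ^ (s + 1) * ∏ i, b i) ^ s := by
      rw [Finset.prod_mul_distrib, Finset.prod_const, Finset.card_univ, Fintype.card_fin,
        herase, mul_pow, ← pow_mul, ← pow_mul, Nat.mul_comm s (s + 1)]
    have hr : (∏ i : Fin (s + 1), (B - b i) ^ s) = (∏ i, (B - b i)) ^ s :=
      Finset.prod_pow _ _ _
    rw [hl, hr] at hprod
    exact (Nat.pow_le_pow_iff_left hs.ne').mp hprod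
  have hfinal : (∏ i, (g i * G i)) * s ^ (s + 1) ≤ ∏ i, (B - b i) :=
    calc (∏ i, (g i * G i)) * s ^ (s + 1) ≤ (∏ i, b i) * s ^ (s + 1) :=
          Nat.mul_le_mul_right _ step1
      _ = s ^ (s + 1) * ∏ i, b i := Nat.mul_comm _ _
      _ ≤ ∏ i, (B - b i) := step2
  have hspos : (0 : ℚ) < (s : ℚ) ^ (s + 1) := by positivity
  calc (∏ i : Fin (s + 1), ((g i * G i : ℕ) : ℚ))
      = ((∏ i, (g i * G i) : ℕ) : ℚ) := by push_cast; ring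
    _ ≤ ((∏ i, (B - b i) : ℕ) : ℚ) / (s : ℚ) ^ (s + 1) := by
        rw [le_div_iff₀ hspos]
        exact_mod_cast hfinal
    _ = ∏ i : Fin (s + 1), ((B - b i : ℕ) : ℚ) / (s : ℚ) := by
        rw [Finset.prod_div_distrib, Finset.prod_const, Finset.card_univ, Fintype.card_fin]
        push_cast
        ring
end

section
/- Let m_1, ..., m_s be positive integers, put m = m_1 + ... + m_s, and define f(x) = ⌊mx⌋ − Σ_{i=1}^s ⌊m_i x⌋. Then for every positive integer k and every real u with 0 ≤ u ≤ 1, ∫_0^u ( f(kx) − f(x) ) dx = ∫_0^{1−u} ( f(kx) − f(x) ) dx. -/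
open MeasureTheory intervalIntegral

private lemma ceil_eq_floor_add_one_irr {a : ℝ} (ha : Irrational a) : ⌈a⌉ = ⌊a⌋ + 1 := by
  refine le_antisymm (Int.ceil_le_floor_add_one a) ?_
  have h1 : (⌊a⌋ : ℝ) < a := lt_of_le_of_ne (Int.floor_le a) (by
    intro h; exact (ha.ne_int ⌊a⌋) h.symm)
  have : (⌊a⌋ : ℤ) < ⌈a⌉ := Int.lt_ceil.mpr h1
  omega

private lemma floor_nat_sub_irr (N : ℕ) {y : ℝ} (hy : Irrational y) :
    (⌊(N : ℝ) - y⌋ : ℝ) = (N : ℝ) - 1 - (⌊y⌋ : ℝ) := by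
  have h : ((N : ℝ) - y) = -y + (N : ℕ) := by ring
  rw [h, Int.floor_add_natCast, Int.floor_neg, ceil_eq_floor_add_one_irr hy]
  push_cast
  ring

/-- reflection identity for the floor-difference expression -/
private lemma refl_aux (s : ℕ) (hs : 0 < s) (c : Fin s → ℕ) (hc : ∀ i, 0 < c i) (C : ℕ)
    (hC : ∑ i, c i = C) {x : ℝ} (hx : Irrational x) :
    (⌊(C : ℝ) * (1 - x)⌋ : ℝ) - ∑ i, (⌊(c i : ℝ) * (1 - x)⌋ : ℝ)
      = (s : ℝ) - 1 - ((⌊(C : ℝ) * x⌋ : ℝ) - ∑ i, (⌊(c i : ℝ) * x⌋ : ℝ)) := by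
  have key : ∀ n : ℕ, 0 < n → (⌊(n : ℝ) * (1 - x)⌋ : ℝ) = (n : ℝ) - 1 - (⌊(n : ℝ) * x⌋ : ℝ) := by
    intro n hn
    have h1 : (n : ℝ) * (1 - x) = (n : ℝ) - (n : ℝ) * x := by ring
    have h2 : Irrational ((n : ℝ) * x) := hx.natCast_mul hn.ne'
    rw [h1, floor_nat_sub_irr n h2]
  have hCpos : 0 < C := by
    have i0 : Fin s := ⟨0, hs⟩
    have := Finset.single_le_sum (f := c) (fun i _ => Nat.zero_le _) (Finset.mem_univ i0)
    have := hc i0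
    omega
  have hsum : ∑ i, (⌊(c i : ℝ) * (1 - x)⌋ : ℝ)
      = ∑ i, ((c i : ℝ) - 1 - (⌊(c i : ℝ) * x⌋ : ℝ)) :=
    Finset.sum_congr rfl fun i _ => key (c i) (hc i)
  have hcast : ∑ i, ((c i : ℕ) : ℝ) = (C : ℝ) := by
    rw [← hC]; push_cast; rfl
  rw [key C hCpos, hsum]
  rw [Finset.sum_sub_distrib, Finset.sum_sub_distrib, hcast]
  simp only [Finset.sum_const, Finset.card_univ, Fintype.card_fin, nsmul_eq_mul, mul_one]
  ring

/-- For positive integers `m₁,…,m_s`, `m = m₁+⋯+m_s`, `f x = ⌊mx⌋ − Σᵢ ⌊mᵢx⌋`, every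
positive integer `k`, and every `u ∈ [0,1]`:
`∫_0^u (f(kx) − f(x)) dx = ∫_0^{1−u} (f(kx) − f(x)) dx`. -/
theorem integral_floor_diff_symm
    (s : ℕ) (hs : 0 < s) (m : Fin s → ℕ) (hm : ∀ i, 0 < m i)
    (f : ℝ → ℝ)
    (hf : ∀ x : ℝ, f x = (⌊((∑ i, m i : ℕ) : ℝ) * x⌋ : ℝ) - ∑ i, (⌊(m i : ℝ) * x⌋ : ℝ))
    (k : ℕ) (hk : 0 < k) (u : ℝ) (hu0 : 0 ≤ u) (hu1 : u ≤ 1) :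
    (∫ x in (0:ℝ)..u, (f ((k : ℝ) * x) - f x))
      = ∫ x in (0:ℝ)..(1 - u), (f ((k : ℝ) * x) - f x) := by
  set M : ℕ := ∑ i, m i with hM
  set G : ℝ → ℝ := fun x => f ((k : ℝ) * x) - f x with hGdef
  -- rewrite f(k*x)
  have hfk : ∀ x : ℝ, f ((k : ℝ) * x)
      = (⌊((M * k : ℕ) : ℝ) * x⌋ : ℝ) - ∑ i, (⌊((m i * k : ℕ) : ℝ) * x⌋ : ℝ) := by
    intro x
    rw [hf]
    congr 1
    · congr 1
      push_cast; ring
    · refine Finset.sum_congr rfl fun i _ => ?_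
      congr 2
      push_cast; ring
  -- integrability of G on any interval
  have hint : ∀ a b : ℝ, IntervalIntegrable G volume a b := by
    intro a b
    have mono : ∀ n : ℕ, Monotone fun x : ℝ => (⌊(n : ℝ) * x⌋ : ℝ) := by
      intro n x y hxy
      have h : (n : ℝ) * x ≤ (n : ℝ) * y :=
        mul_le_mul_of_nonneg_left hxy (by positivity)
      show (⌊(n : ℝ) * x⌋ : ℝ) ≤ (⌊(n : ℝ) * y⌋ : ℝ)
      exact_mod_cast Int.floor_le_floor h
    have monosum : ∀ c : Fin s → ℕ, Monotone fun x : ℝ => ∑ i, (⌊(c i : ℝ) * x⌋ : ℝ) := by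
      intro c x y hxy
      exact Finset.sum_le_sum fun i _ => mono (c i) hxy
    have hA : Monotone fun x : ℝ =>
        (⌊((M * k : ℕ) : ℝ) * x⌋ : ℝ) + ∑ i, (⌊(m i : ℝ) * x⌋ : ℝ) := fun x y hxy =>
      add_le_add (mono (M * k) hxy) (monosum m hxy)
    have hB : Monotone fun x : ℝ =>
        (⌊(M : ℝ) * x⌋ : ℝ) + ∑ i, (⌊((m i * k : ℕ) : ℝ) * x⌋ : ℝ) := fun x y hxy =>
      add_le_add (mono M hxy) (monosum (fun i => m i * k) hxy)
    have hGeq : G = (fun x : ℝ =>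
        (⌊((M * k : ℕ) : ℝ) * x⌋ : ℝ) + ∑ i, (⌊(m i : ℝ) * x⌋ : ℝ))
        - (fun x : ℝ => (⌊(M : ℝ) * x⌋ : ℝ) + ∑ i, (⌊((m i * k : ℕ) : ℝ) * x⌋ : ℝ)) := by
      funext x
      simp only [hGdef, Pi.sub_apply, hfk x, hf x, ← hM]
      ring
    rw [hGeq]
    exact (hA.intervalIntegrable).sub (hB.intervalIntegrable)
  -- pointwise reflection for irrational x
  have keyx : ∀ x : ℝ, Irrational x → G (1 - x) = -G x := by
    intro x hx
    have h1 : f (1 - x) = (s : ℝ) - 1 - f x := by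
      rw [hf (1 - x), hf x]
      exact refl_aux s hs m hm M hM.symm hx
    have h2 : f ((k : ℝ) * (1 - x)) = (s : ℝ) - 1 - f ((k : ℝ) * x) := by
      rw [hfk (1 - x), hfk x]
      exact refl_aux s hs (fun i => m i * k) (fun i => Nat.mul_pos (hm i) hk) (M * k)
        (by rw [← Finset.sum_mul, hM]) hx
    simp only [hGdef, h1, h2]
    ring
  -- a.e. version
  have hae : ∀ᵐ x ∂(volume : Measure ℝ), G x = -G (1 - x) := by
    have hcnt : (Set.range ((↑) : ℚ → ℝ)).Countable := Set.countable_range _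
    have h0 : (volume : Measure ℝ) {x : ℝ | ¬ Irrational x} = 0 := by
      have : {x : ℝ | ¬ Irrational x} = Set.range ((↑) : ℚ → ℝ) := by
        ext x; simp [Irrational]
      rw [this]
      exact hcnt.measure_zero _
    have hirr : ∀ᵐ x ∂(volume : Measure ℝ), Irrational x := by
      rw [ae_iff]; exact h0
    filter_upwards [hirr] with x hx
    rw [keyx x hx, neg_neg]
  -- generic identity ∫_0^v G = -∫_{1-v}^1 G
  have main : ∀ v : ℝ, (∫ x in (0:ℝ)..v, G x) = -∫ x in (1 - v)..(1:ℝ), G x := by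
    intro v
    have step1 : (∫ x in (0:ℝ)..v, G x) = ∫ x in (0:ℝ)..v, -G (1 - x) :=
      intervalIntegral.integral_congr_ae (hae.mono fun x hx _ => hx)
    rw [step1, intervalIntegral.integral_neg]
    congr 1
    have := intervalIntegral.integral_comp_sub_left (a := (0:ℝ)) (b := v) G 1
    simpa using this
  have h1 : (∫ x in (0:ℝ)..(1:ℝ), G x) = 0 := by
    have := main 1
    simp only [sub_self] at this
    have h2 : (∫ x in (0:ℝ)..(1:ℝ), G x) = -∫ x in (0:ℝ)..(1:ℝ), G x := this
    linarith
  have hadd : (∫ x in (0:ℝ)..(1 - u), G x) + (∫ x in (1 - u)..(1:ℝ), G x)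
      = ∫ x in (0:ℝ)..(1:ℝ), G x :=
    intervalIntegral.integral_add_adjacent_intervals (hint 0 (1 - u)) (hint (1 - u) 1)
  have := main u
  rw [this]
  rw [h1] at hadd
  linarith
end

section
/- Let m_1, ..., m_s be positive integers, put m = m_1 + ... + m_s, define f(x) = ⌊mx⌋ − Σ_{i=1}^s ⌊m_i x⌋, let k be a positive integer and p a prime not dividing k, and let e ≥ 1. Define H(t) = Σ_{n=1}^t ( f(kn/p^e) − f(n/p^e) ). Then H(t) = H(p^e − 1 − t) for every integer t with 0 ≤ t ≤ p^e − 1. -/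
private lemma floor_pair (P a : ℕ) (hP : 0 < P) :
    (⌊(a : ℝ) / P⌋ : ℤ) + ⌊-((a : ℝ) / P)⌋ = if P ∣ a then 0 else -1 := by
  have hP' : (P : ℝ) ≠ 0 := by positivity
  rw [Int.floor_neg]
  split_ifs with h
  · obtain ⟨c, rfl⟩ := h
    have hx : ((P * c : ℕ) : ℝ) / P = (c : ℝ) := by
      push_cast; field_simp
    rw [hx]
    rw [show ((c : ℝ)) = ((c : ℤ) : ℝ) by push_cast; ring]
    rw [Int.floor_intCast, Int.ceil_intCast]
    ring
  · have hfr : Int.fract ((a : ℝ) / P) ≠ 0 := by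
      intro h0
      have h1 : ((a : ℝ) / P) = (⌊(a : ℝ) / P⌋ : ℝ) := by
        have := Int.self_sub_floor ((a : ℝ) / P)
        rw [h0] at this
        linarith
      have h2 : (a : ℝ) = (⌊(a : ℝ) / P⌋ : ℝ) * P := by
        field_simp at h1; linarith
      have h3 : (a : ℤ) = ⌊(a : ℝ) / P⌋ * P := by
        exact_mod_cast h2
      exact h ⟨(⌊(a : ℝ) / P⌋).toNat, by
        have hnn : 0 ≤ ⌊(a : ℝ) / P⌋ := Int.floor_nonneg.2 (by positivity)
        have : (a : ℤ) = (P : ℤ) * (⌊(a : ℝ) / P⌋).toNat := by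
          rw [Int.toNat_of_nonneg hnn]; linarith
        exact_mod_cast this⟩
    have hceil : (⌈(a : ℝ) / P⌉ : ℝ) = (⌊(a : ℝ) / P⌋ : ℝ) + 1 := by
      rw [Int.ceil_eq_add_one_sub_fract hfr, ← Int.self_sub_fract]
      ring
    have : ⌈(a : ℝ) / P⌉ = ⌊(a : ℝ) / P⌋ + 1 := by exact_mod_cast hceil
    rw [this]; ring

/-- **Palindromic symmetry of the partial sums.** For positive integers `m₁,…,m_s`,
`m = m₁+⋯+m_s`, `f x = ⌊mx⌋ − Σᵢ ⌊mᵢx⌋`, a positive integer `k`, a prime `p` not dividing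
`k`, and `e ≥ 1`, the sums `H(t) = Σ_{n=1}^t (f(kn/pᵉ) − f(n/pᵉ))` satisfy
`H(t) = H(pᵉ − 1 − t)` for all `0 ≤ t ≤ pᵉ − 1`. -/
theorem partial_sum_palindrome
    (s : ℕ) (hs : 0 < s) (m : Fin s → ℕ) (hm : ∀ i, 0 < m i)
    (f : ℝ → ℝ)
    (hf : ∀ x : ℝ, f x = (⌊((∑ i, m i : ℕ) : ℝ) * x⌋ : ℝ) - ∑ i, (⌊(m i : ℝ) * x⌋ : ℝ))
    (k : ℕ) (hk : 0 < k) (p : ℕ) (hp : p.Prime) (hpk : ¬ p ∣ k) (e : ℕ) (he : 1 ≤ e)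
    (t : ℕ) (ht : t ≤ p ^ e - 1) :
    (∑ n ∈ Finset.Icc 1 t,
        (f ((k * n : ℕ) / (p ^ e : ℕ) : ℝ) - f ((n : ℝ) / (p ^ e : ℕ))))
      = ∑ n ∈ Finset.Icc 1 (p ^ e - 1 - t),
          (f ((k * n : ℕ) / (p ^ e : ℕ) : ℝ) - f ((n : ℝ) / (p ^ e : ℕ))) := by
  set P : ℕ := p ^ e with hPdef
  have hP : 0 < P := pow_pos hp.pos e
  have hP' : (P : ℝ) ≠ 0 := by positivity
  set M : ℕ := ∑ i, m i with hM
  set N : ℕ := P - 1 with hN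
  have hNP : N + 1 = P := Nat.succ_pred_eq_of_pos hP
  -- coprimality
  have hcop : Nat.Coprime P k := Nat.Coprime.pow_left _ (hp.coprime_iff_not_dvd.2 hpk)
  -- the indicator function
  have hdvd_mul_k : ∀ b : ℕ, P ∣ b * k ↔ P ∣ b := fun b =>
    ⟨fun h => hcop.dvd_of_dvd_mul_right h, fun h => h.mul_right k⟩
  -- f is periodic mod 1 (for integer shifts)
  have hper : ∀ (x : ℝ) (j : ℤ), f (x + j) = f x := by
    intro x j
    rw [hf, hf]
    have h1 : ∀ c : ℕ, (⌊(c : ℝ) * (x + j)⌋ : ℝ) = (⌊(c : ℝ) * x⌋ : ℝ) + (c * j : ℤ) := by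
      intro c
      have : (c : ℝ) * (x + j) = (c : ℝ) * x + ((c * j : ℤ) : ℝ) := by push_cast; ring
      rw [this, Int.floor_add_intCast]; push_cast; ring
    rw [h1, Finset.sum_congr rfl fun i _ => h1 (m i)]
    rw [Finset.sum_add_distrib]
    have : ((M * j : ℤ) : ℝ) = ∑ i : Fin s, ((m i * j : ℤ) : ℝ) := by
      push_cast [hM]; rw [Finset.sum_mul]
    push_cast at this ⊢
    linarith [this]
  -- reflection formula for f-sums
  have hd : ∀ b : ℕ, f ((b : ℝ) / P) + f (-((b : ℝ) / P))
      = (if P ∣ M * b then (0:ℝ) else -1) - ∑ i, (if P ∣ m i * b then (0:ℝ) else -1) := by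
    intro b
    rw [hf, hf]
    have h1 : ∀ c : ℕ, (⌊(c : ℝ) * ((b : ℝ) / P)⌋ : ℝ) + (⌊(c : ℝ) * (-((b : ℝ) / P))⌋ : ℝ)
        = (if P ∣ c * b then (0:ℝ) else -1) := by
      intro c
      have hx : (c : ℝ) * ((b : ℝ) / P) = ((c * b : ℕ) : ℝ) / P := by push_cast; ring
      have hx' : (c : ℝ) * (-((b : ℝ) / P)) = -(((c * b : ℕ) : ℝ) / P) := by push_cast; ring
      rw [hx, hx']
      rcases em (P ∣ c * b) with h | h
      · rw [if_pos h]
        have h2 := floor_pair P (c * b) hP; rw [if_pos h] at h2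
        exact_mod_cast h2
      · rw [if_neg h]
        have h2 := floor_pair P (c * b) hP; rw [if_neg h] at h2
        exact_mod_cast h2
    have hsum : ∑ i, ((⌊(m i : ℝ) * ((b : ℝ) / P)⌋ : ℝ) + (⌊(m i : ℝ) * (-((b : ℝ) / P))⌋ : ℝ))
        = ∑ i, (if P ∣ m i * b then (0:ℝ) else -1) :=
      Finset.sum_congr rfl fun i _ => h1 (m i)
    rw [Finset.sum_add_distrib] at hsum
    have := h1 M
    linarith [this, hsum]
  -- the key antisymmetry: G (P - n) = - G n for 1 ≤ n ≤ N
  set G : ℕ → ℝ := fun n => f ((k * n : ℕ) / (P : ℕ) : ℝ) - f ((n : ℝ) / P) with hG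
  have hkey : ∀ n : ℕ, 1 ≤ n → n ≤ N → G (P - n) = -G n := by
    intro n hn1 hnN
    have hnP : n ≤ P := le_trans hnN (Nat.sub_le _ _)
    have e1 : ((P - n : ℕ) : ℝ) = (P : ℝ) - n := by
      rw [Nat.cast_sub hnP]
    have e2 : ((k * (P - n) : ℕ) : ℝ) / P = -(((k * n : ℕ) : ℝ) / P) + (k : ℤ) := by
      push_cast [Nat.cast_sub hnP]
      field_simp
      ring
    have e3 : ((P - n : ℕ) : ℝ) / P = -((n : ℝ) / P) + ((1 : ℤ) : ℝ) := by
      rw [e1]; field_simp; ring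
    have hfk : f (((k * (P - n) : ℕ) : ℝ) / P) = f (-(((k * n : ℕ) : ℝ) / P)) := by
      rw [e2, hper]
    have hf1 : f (((P - n : ℕ) : ℝ) / P) = f (-((n : ℝ) / P)) := by
      rw [e3, hper]
    have hd1 := hd (k * n)
    have hd2 := hd n
    -- indicators agree: P ∣ c * (k * n) ↔ P ∣ c * n
    have hind : ∀ c : ℕ, (if P ∣ c * (k * n) then (0:ℝ) else -1)
        = (if P ∣ c * n then (0:ℝ) else -1) := by
      intro c
      have : P ∣ c * (k * n) ↔ P ∣ c * n := by
        rw [show c * (k * n) = (c * n) * k by ring, hdvd_mul_k]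
      simp only [this]
    rw [hind, Finset.sum_congr rfl fun i _ => hind (m i)] at hd1
    simp only [hG]
    rw [hfk, hf1]
    linarith [hd1, hd2]
  -- reflection of sums over Ioc
  have hrefl : ∀ u : ℕ, u ≤ N →
      ∑ n ∈ Finset.Ioc u N, G n = -∑ n ∈ Finset.Ioc 0 (N - u), G n := by
    intro u hu
    rw [← Finset.sum_neg_distrib]
    refine Finset.sum_nbij' (fun n => P - n) (fun n => P - n) ?_ ?_ ?_ ?_ ?_
    · intro a ha
      simp only [Finset.mem_Ioc] at ha ⊢
      omega
    · intro a ha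
      simp only [Finset.mem_Ioc] at ha ⊢
      omega
    · intro a ha
      simp only [Finset.mem_Ioc] at ha
      show P - (P - a) = a
      omega
    · intro a ha
      simp only [Finset.mem_Ioc] at ha
      show P - (P - a) = a
      omega
    · intro a ha
      simp only [Finset.mem_Ioc] at ha
      show G a = -G (P - a)
      rw [hkey a (by omega) (by omega), neg_neg]
  -- total sum is zero
  have htot : ∑ n ∈ Finset.Ioc 0 N, G n = 0 := by
    have := hrefl 0 (Nat.zero_le _)
    simp only [Nat.sub_zero] at this
    linarith
  -- split
  have hsplit := Finset.sum_Ioc_consecutive G (Nat.zero_le t) ht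
  have h2 := hrefl t ht
  have hicc : ∀ v : ℕ, Finset.Icc 1 v = Finset.Ioc 0 v := by
    intro v; ext x; simp [Nat.lt_iff_add_one_le]
  rw [hicc, hicc]
  have : ∑ n ∈ Finset.Ioc 0 t, G n = ∑ n ∈ Finset.Ioc 0 (N - t), G n := by
    linarith [hsplit, h2, htot]
  simpa [hG] using this
end
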